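/- arXiv:1605.00119 — 11 statements merged into one kernel-verified Lean document; each statement's English description precedes it below -/
import Mathlib

section
/- Let k ≥ 2 be an integer, and let C_k > 0, α > 0, β > 0 be reals. Suppose given reals t_1, …, t_k with 0 < t_1 ≤ t_2 ≤ ⋯ ≤ t_k, and for each i = 1, …, k−1 reals U_i > 0, α_i with 0 < α_i ≤ α, and β_i with 0 < β_i ≤ β. If C_k/t_k ≤ ((α/β) + 1)/∏_{j=1}^{k−1}(β·U_j + 1) − α/β, then there exists an index j ∈ {1, …, k} such that C_k + Σ_{i=1}^{k−1} α_i·t_i·U_i + Σ_{i=1}^{j−1} β_i·t_i·U_i ≤ t_j. -/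
open Finset

/-!
If no test point works, then `B j := C_k + α S + β ∑_{i<j} t_i U_i`, with `S = ∑_{i<k} t_i U_i`,
dominates `t j` for every `j`. Summation-form discrete Grönwall then gives
`B k ≤ (C_k + α S) ∏ (β U_j + 1)`, and after clearing denominators the hyperbolic condition turns
this into `B k ≤ t k`, contradicting `t k < B k`.
-/

theorem add_sum_mul_le_mul_prod_add_one {R : Type*} [CommRing R] [PartialOrder R]
    [IsOrderedRing R] {X : R} {c s : ℕ → R} {n : ℕ}
    (hc : ∀ i ∈ Icc 1 n, 0 ≤ c i)
    (hs : ∀ j ∈ Icc 1 n, s j ≤ X + ∑ i ∈ Icc 1 (j - 1), c i * s i) :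
    X + ∑ i ∈ Icc 1 n, c i * s i ≤ X * ∏ i ∈ Icc 1 n, (c i + 1) := by
  induction n with
  | zero => simp
  | succ n ih =>
    have hmem : n + 1 ∈ Icc 1 (n + 1) := by simp
    have hsub : Icc 1 n ⊆ Icc 1 (n + 1) := Icc_subset_Icc_right n.le_succ
    have hcn := hc (n + 1) hmem
    have hsn : s (n + 1) ≤ X + ∑ i ∈ Icc 1 n, c i * s i := hs (n + 1) hmem
    rw [sum_Icc_succ_top (by omega), prod_Icc_succ_top (by omega)]
    calc X + (∑ i ∈ Icc 1 n, c i * s i + c (n + 1) * s (n + 1))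
        ≤ (X + ∑ i ∈ Icc 1 n, c i * s i) * (c (n + 1) + 1) := by
          linear_combination mul_le_mul_of_nonneg_left hsn hcn
      _ ≤ X * (∏ i ∈ Icc 1 n, (c i + 1)) * (c (n + 1) + 1) := by
          gcongr
          · exact le_add_of_nonneg_of_le hcn zero_le_one
          · exact ih (fun i hi ↦ hc i (hsub hi)) (fun j hj ↦ hs j (hsub hj))
      _ = X * ((∏ i ∈ Icc 1 n, (c i + 1)) * (c (n + 1) + 1)) := mul_assoc _ _ _

theorem add_mul_le_of_le_mul_of_div_le {C α β P S t : ℝ} (hC : 0 < C) (hα : 0 ≤ α)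
    (hβ : 0 < β) (hP : 0 < P) (ht : 0 < t)
    (hgron : C + α * S + β * S ≤ (C + α * S) * P)
    (hcond : C / t ≤ (α / β + 1) / P - α / β) :
    C + (α + β) * S ≤ t := by
  have hcleared : C * β * P ≤ t * (α + β - α * P) := by
    rw [div_le_iff₀ ht] at hcond
    have := mul_le_mul_of_nonneg_right hcond (by positivity : 0 ≤ β * P)
    field_simp at this
    linarith
  have hD : 0 < α + β - α * P := by
    by_contra! h
    nlinarith [mul_pos (mul_pos hC hβ) hP, mul_nonpos_of_nonneg_of_nonpos ht.le h]
  have hSD : S * (α + β - α * P) ≤ C * (P - 1) := by linarith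
  refine le_of_mul_le_mul_right ?_ hD
  calc (C + (α + β) * S) * (α + β - α * P)
      = C * (α + β - α * P) + (α + β) * (S * (α + β - α * P)) := by ring
    _ ≤ C * (α + β - α * P) + (α + β) * (C * (P - 1)) := by gcongr
    _ = C * β * P := by ring
    _ ≤ t * (α + β - α * P) := hcleared

theorem k2u_hyperbolic_form
    (k : ℕ) (hk : 2 ≤ k) (Ck α β : ℝ)
    (hCk : 0 < Ck) (hα : 0 < α) (hβ : 0 < β)
    (t U a b : ℕ → ℝ)
    (ht1 : 0 < t 1)
    (hmono : ∀ i ∈ Finset.Icc 1 k, ∀ j ∈ Finset.Icc 1 k, i ≤ j → t i ≤ t j)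
    (hU : ∀ i ∈ Finset.Icc 1 (k - 1), 0 < U i)
    (ha : ∀ i ∈ Finset.Icc 1 (k - 1), 0 < a i ∧ a i ≤ α)
    (hb : ∀ i ∈ Finset.Icc 1 (k - 1), 0 < b i ∧ b i ≤ β)
    (hcond : Ck / t k ≤ (α / β + 1) / (∏ j ∈ Finset.Icc 1 (k - 1), (β * U j + 1)) - α / β) :
    ∃ j ∈ Finset.Icc 1 k,
      Ck + (∑ i ∈ Finset.Icc 1 (k - 1), a i * t i * U i)
        + (∑ i ∈ Finset.Icc 1 (j - 1), b i * t i * U i) ≤ t j := by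
  by_contra! hfail
  have hkk : k ∈ Icc 1 k := mem_Icc.mpr ⟨by omega, le_rfl⟩
  have hsub : Icc 1 (k - 1) ⊆ Icc 1 k := Icc_subset_Icc_right (Nat.sub_le k 1)
  have htpos : ∀ i ∈ Icc 1 k, 0 < t i := fun i hi ↦
    ht1.trans_le (hmono 1 (mem_Icc.mpr ⟨le_rfl, by omega⟩) i hi (mem_Icc.mp hi).1)
  have htU : ∀ i ∈ Icc 1 (k - 1), 0 ≤ t i * U i := fun i hi ↦
    mul_nonneg (htpos i (hsub hi)).le (hU i hi).le
  set S := ∑ i ∈ Icc 1 (k - 1), t i * U i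
  have hA : ∑ i ∈ Icc 1 (k - 1), a i * t i * U i ≤ α * S := by
    rw [mul_sum]
    refine sum_le_sum fun i hi ↦ ?_
    rw [mul_assoc]
    exact mul_le_mul_of_nonneg_right (ha i hi).2 (htU i hi)
  have hB : ∀ j ∈ Icc 1 k, ∑ i ∈ Icc 1 (j - 1), b i * t i * U i
      ≤ ∑ i ∈ Icc 1 (j - 1), β * U i * t i := fun j hj ↦ by
    refine sum_le_sum fun i hi ↦ ?_
    have hi' : i ∈ Icc 1 (k - 1) := by simp only [mem_Icc] at hi hj ⊢; omega
    linear_combination mul_le_mul_of_nonneg_right (hb i hi').2 (htU i hi')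
  have hgron := add_sum_mul_le_mul_prod_add_one (X := Ck + α * S) (c := fun i ↦ β * U i)
    (s := t) (n := k - 1) (fun i hi ↦ (mul_pos hβ (hU i hi)).le)
    (fun j hj ↦ by linarith [hfail j (hsub hj), hB j (hsub hj)])
  have hβS : ∑ i ∈ Icc 1 (k - 1), β * U i * t i = β * S := by
    rw [mul_sum]; exact sum_congr rfl fun i _ ↦ by ring
  have hP : 0 < ∏ j ∈ Icc 1 (k - 1), (β * U j + 1) :=
    prod_pos fun i hi ↦ by linarith [mul_pos hβ (hU i hi)]
  have htk := add_mul_le_of_le_mul_of_div_le (S := S) hCk hα.le hβ hP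
    (htpos k hkk) (hβS ▸ hgron) hcond
  linarith [hfail k hkk, hB k hkk]
end

section
/- Let k ≥ 2 be an integer, and let C_k > 0, α > 0, β > 0 be reals. Suppose given reals t_1, …, t_k with 0 < t_1 ≤ t_2 ≤ ⋯ ≤ t_k, and for each i = 1, …, k−1 reals U_i > 0, α_i with 0 < α_i ≤ α, and β_i with 0 < β_i ≤ β. If C_k/t_k + Σ_{i=1}^{k−1} U_i ≤ ((k−1)·((α+β)^{1/k} − 1) + ((α+β)^{1/k} − α))/β, then there exists an index j ∈ {1, …, k} such that C_k + Σ_{i=1}^{k−1} α_i·t_i·U_i + Σ_{i=1}^{j−1} β_i·t_i·U_i ≤ t_j. -/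
/-!
Suppose every test point fails, and let `D_j = C_k + α S + β (w_1 + ⋯ + w_{j-1})` with `w_i = t_i U_i`
and `S = w_1 + ⋯ + w_{k-1}`; then `t_j < D_j` for all `j`. Since `D_{j+1} = D_j + β t_j U_j`, each
ratio `D_{j+1}/D_j` is below `1 + β U_j`. The `k` numbers `D_{j+1}/D_j` (`j < k`) and
`(α+β) D_1/D_k` have product `α + β`, so by AM-GM their sum is at least `k (α+β)^{1/k}`; as
`(α+β) D_1/D_k = α + β C_k/D_k` and `C_k/D_k < C_k/t_k`, this contradicts the utilization bound.
-/

open Finset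

theorem Nat.Icc_sub_one_right_eq_Ico_of_pos {a : ℕ} (ha : 0 < a) (b : ℕ) :
    Icc a (b - 1) = Ico a b := by
  ext
  simp only [mem_Icc, mem_Ico]
  omega

theorem sum_mul_le_mul_sum {ι : Type*} (s : Finset ι) (a w : ι → ℝ) (c : ℝ)
    (hw : ∀ i ∈ s, 0 ≤ w i) (ha : ∀ i ∈ s, a i ≤ c) :
    ∑ i ∈ s, a i * w i ≤ c * ∑ i ∈ s, w i := by
  rw [mul_sum]
  exact sum_le_sum fun i hi ↦ mul_le_mul_of_nonneg_right (ha i hi) (hw i hi)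

theorem card_mul_prod_rpow_le_sum {ι : Type*} (s : Finset ι) (z : ι → ℝ)
    (hz : ∀ i ∈ s, 0 ≤ z i) :
    #s * (∏ i ∈ s, z i) ^ ((1 : ℝ) / #s) ≤ ∑ i ∈ s, z i := by
  rcases s.eq_empty_or_nonempty with rfl | hs
  · simp
  have hcard : (0 : ℝ) < #s := by exact_mod_cast hs.card_pos
  have hamgm := Real.geom_mean_le_arith_mean_weighted s (fun _ ↦ 1 / #s) z
    (fun _ _ ↦ by positivity) (by simp [hcard.ne']) hz
  rw [Real.finsetProd_rpow s z hz, ← mul_sum] at hamgm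
  calc (#s : ℝ) * (∏ i ∈ s, z i) ^ ((1 : ℝ) / #s)
      ≤ #s * (1 / #s * ∑ i ∈ s, z i) := by gcongr
    _ = ∑ i ∈ s, z i := by field_simp

theorem prod_Ico_div_eq_div {M : Type*} [CommGroupWithZero M] (G : ℕ → M) {m n : ℕ}
    (hmn : m ≤ n) (hG : ∀ j ∈ Icc m n, G j ≠ 0) :
    ∏ j ∈ Ico m n, G (j + 1) / G j = G n / G m := by
  induction n, hmn using Nat.le_induction with
  | base => simp [div_self (hG m (by simp))]
  | succ n hmn ih =>
    rw [prod_Ico_succ_top hmn, ih fun j hj ↦ hG j (Icc_subset_Icc_right n.le_succ hj),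
      mul_comm, div_mul_div_cancel₀ (hG n (by simp [hmn]))]

theorem nat_mul_rpow_le_sum_div_add (k : ℕ) (hk : 1 ≤ k) (G : ℕ → ℝ)
    (hG : ∀ j ∈ Icc 1 k, 0 < G j) (c : ℝ) (hc : 0 ≤ c) :
    k * c ^ ((1 : ℝ) / k) ≤ ∑ j ∈ Ico 1 k, G (j + 1) / G j + c * (G 1 / G k) := by
  have hk_mem : k ∈ Icc 1 k := by simp [hk]
  have hrest : Icc 1 k \ {k} = Ico 1 k := by rw [sdiff_singleton_eq_erase, Icc_erase_right]
  set z := Function.update (fun j ↦ G (j + 1) / G j) k (c * (G 1 / G k))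
  have hz : ∀ j ∈ Icc 1 k, 0 ≤ z j := by
    intro j hj
    rcases eq_or_ne j k with rfl | hjk
    · simp only [z, Function.update_self]
      exact mul_nonneg hc (div_nonneg (hG 1 (by simp [hk])).le (hG j hj).le)
    · simp only [z, Function.update_of_ne hjk]
      have : j + 1 ∈ Icc 1 k := by simp only [mem_Icc] at hj ⊢; omega
      exact div_nonneg (hG _ this).le (hG j hj).le
  have hprod : ∏ j ∈ Icc 1 k, z j = c := by
    rw [prod_update_of_mem hk_mem, hrest, prod_Ico_div_eq_div G hk fun j hj ↦ (hG j hj).ne']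
    field_simp [(hG 1 (by simp [hk])).ne', (hG k hk_mem).ne']
  have hsum : ∑ j ∈ Icc 1 k, z j = ∑ j ∈ Ico 1 k, G (j + 1) / G j + c * (G 1 / G k) := by
    rw [sum_update_of_mem hk_mem, hrest, add_comm]
  simpa [hprod, hsum] using card_mul_prod_rpow_le_sum (Icc 1 k) z hz

theorem k2u_bound_le_of_ratio_le (k : ℕ) (hk : 1 ≤ k) (α β C : ℝ) (hαβ : 0 ≤ α + β)
    (G U : ℕ → ℝ) (hG : ∀ j ∈ Icc 1 k, 0 < G j)
    (hratio : ∀ j ∈ Ico 1 k, G (j + 1) ≤ G j * (1 + β * U j))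
    (hends : β * C = (α + β) * G 1 - α * G k) :
    ((k : ℝ) - 1) * ((α + β) ^ ((1 : ℝ) / k) - 1) + ((α + β) ^ ((1 : ℝ) / k) - α)
      ≤ β * (C / G k + ∑ j ∈ Ico 1 k, U j) := by
  have hamgm := nat_mul_rpow_le_sum_div_add k hk G hG (α + β) hαβ
  have hsteps : ∑ j ∈ Ico 1 k, G (j + 1) / G j ≤ ∑ j ∈ Ico 1 k, (1 + β * U j) :=
    sum_le_sum fun j hj ↦ (div_le_iff₀' (hG j (Ico_subset_Icc_self hj))).2 (hratio j hj)
  have hcount : ∑ j ∈ Ico 1 k, (1 + β * U j) = ((k : ℝ) - 1) + β * ∑ j ∈ Ico 1 k, U j := by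
    simp [sum_add_distrib, mul_sum, Nat.cast_sub hk]
  have hlast : (α + β) * (G 1 / G k) = α + β * (C / G k) := by
    field_simp [(hG k (by simp [hk])).ne']
    linarith
  rw [mul_add]
  linarith

def demandBound (k : ℕ) (C α β : ℝ) (w : ℕ → ℝ) (j : ℕ) : ℝ :=
  C + α * ∑ i ∈ Ico 1 k, w i + β * ∑ i ∈ Ico 1 j, w i

theorem demandBound_succ (k : ℕ) (C α β : ℝ) (w : ℕ → ℝ) {j : ℕ} (hj : 1 ≤ j) :
    demandBound k C α β w (j + 1) = demandBound k C α β w j + β * w j := by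
  simp only [demandBound, sum_Ico_succ_top hj]
  ring

theorem mul_eq_demandBound_one_sub (k : ℕ) (C α β : ℝ) (w : ℕ → ℝ) :
    β * C = (α + β) * demandBound k C α β w 1 - α * demandBound k C α β w k := by
  simp only [demandBound, Ico_self, sum_empty]
  ring

theorem k2u_total_utilization_form
    (k : ℕ) (hk : 2 ≤ k) (Ck α β : ℝ)
    (hCk : 0 < Ck) (hα : 0 < α) (hβ : 0 < β)
    (t U a b : ℕ → ℝ)
    (ht1 : 0 < t 1)
    (hmono : ∀ i ∈ Finset.Icc 1 k, ∀ j ∈ Finset.Icc 1 k, i ≤ j → t i ≤ t j)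
    (hU : ∀ i ∈ Finset.Icc 1 (k - 1), 0 < U i)
    (ha : ∀ i ∈ Finset.Icc 1 (k - 1), 0 < a i ∧ a i ≤ α)
    (hb : ∀ i ∈ Finset.Icc 1 (k - 1), 0 < b i ∧ b i ≤ β)
    (hcond : Ck / t k + ∑ i ∈ Finset.Icc 1 (k - 1), U i ≤
      (((k : ℝ) - 1) * ((α + β) ^ ((1 : ℝ) / k) - 1) + ((α + β) ^ ((1 : ℝ) / k) - α)) / β) :
    ∃ j ∈ Finset.Icc 1 k,
      Ck + (∑ i ∈ Finset.Icc 1 (k - 1), a i * t i * U i)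
        + (∑ i ∈ Finset.Icc 1 (j - 1), b i * t i * U i) ≤ t j := by
  have hk1 : 1 ≤ k := by omega
  have hkk : k ∈ Icc 1 k := by simp [hk1]
  have ht : ∀ i ∈ Icc 1 k, 0 < t i := fun i hi ↦
    ht1.trans_le (hmono 1 (by simp [hk1]) i hi (mem_Icc.1 hi).1)
  simp only [Nat.Icc_sub_one_right_eq_Ico_of_pos one_pos, mul_assoc] at hU ha hb hcond ⊢
  by_contra! hcon
  set D := demandBound k Ck α β (fun i ↦ t i * U i) with hD_def
  have hw : ∀ i ∈ Ico 1 k, 0 ≤ t i * U i := fun i hi ↦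
    (mul_pos (ht i (Ico_subset_Icc_self hi)) (hU i hi)).le
  have hlt : ∀ j ∈ Icc 1 k, t j < D j := by
    intro j hj
    have hsub : Ico 1 j ⊆ Ico 1 k := Ico_subset_Ico_right (mem_Icc.1 hj).2
    refine (hcon j hj).trans_le (add_le_add (add_le_add le_rfl ?_) ?_)
    · exact sum_mul_le_mul_sum _ _ _ _ hw fun i hi ↦ (ha i hi).2
    · exact sum_mul_le_mul_sum _ _ _ _ (fun i hi ↦ hw i (hsub hi)) fun i hi ↦ (hb i (hsub hi)).2
  have hD : ∀ j ∈ Icc 1 k, 0 < D j := fun j hj ↦ (ht j hj).trans (hlt j hj)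
  have hratio : ∀ j ∈ Ico 1 k, D (j + 1) ≤ D j * (1 + β * U j) := by
    intro j hj
    have hj' := Ico_subset_Icc_self hj
    rw [hD_def, demandBound_succ _ _ _ _ _ (mem_Ico.1 hj).1, ← hD_def]
    linarith [mul_le_mul_of_nonneg_left (hlt j hj').le (mul_pos hβ (hU j hj)).le]
  have hbound := k2u_bound_le_of_ratio_le k hk1 α β Ck (by linarith) D U hD hratio
    (mul_eq_demandBound_one_sub _ _ _ _ _)
  have hlast : Ck / D k < Ck / t k := div_lt_div_of_pos_left hCk (ht k hkk) (hlt k hkk)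
  rw [le_div_iff₀ hβ] at hcond
  linarith [mul_lt_mul_of_pos_left hlast hβ]
end

section
/- Let k ≥ 2 be an integer, and let C_k > 0, α > 0, β > 0 be reals. Suppose given reals t_1, …, t_k with 0 < t_1 ≤ t_2 ≤ ⋯ ≤ t_k, and for each i = 1, …, k−1 reals U_i > 0, α_i with 0 < α_i ≤ α, and β_i with 0 < β_i ≤ β. If β·Σ_{i=1}^{k−1} U_i ≤ ln( ((α/β) + 1)/(C_k/t_k + α/β) ), then there exists an index j ∈ {1, …, k} such that C_k + Σ_{i=1}^{k−1} α_i·t_i·U_i + Σ_{i=1}^{j−1} β_i·t_i·U_i ≤ t_j. -/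
/-!
Suppose every test point fails, so `t j < D j := Ck + α T + β ∑_{i < j} t i U i` with
`T = ∑_{i < k} t i U i`. This is the hypothesis of a discrete Grönwall inequality, which gives
`D k ≤ D 1 ∏ (1 + β U i) ≤ D 1 exp (β ∑ U i)`. Since `(α + β) D 1 = β Ck + α D k`, the ratio
`D k / D 1 = (α + β) / (β Ck / D k + α)` is increasing in `D k`, and `D k > t k` makes it exceed
`(α / β + 1) / (Ck / t k + α / β)`, contradicting the logarithmic condition.
-/

open Finset

theorem sum_mul_le_mul_sum_of_le {ι : Type*} {s : Finset ι} {a x : ι → ℝ} {α : ℝ}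
    (ha : ∀ i ∈ s, a i ≤ α) (hx : ∀ i ∈ s, 0 ≤ x i) :
    ∑ i ∈ s, a i * x i ≤ α * ∑ i ∈ s, x i := by
  rw [mul_sum]
  exact sum_le_sum fun i hi ↦ mul_le_mul_of_nonneg_right (ha i hi) (hx i hi)

/-- Discrete Grönwall inequality. -/
theorem add_sum_mul_le_mul_prod_one_add {c : ℝ} {w x : ℕ → ℝ} {m n : ℕ} (hmn : m ≤ n)
    (hw : ∀ i ∈ Ico m n, 0 ≤ w i)
    (hx : ∀ i ∈ Ico m n, x i ≤ c + ∑ l ∈ Ico m i, x l * w l) :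
    c + ∑ l ∈ Ico m n, x l * w l ≤ c * ∏ l ∈ Ico m n, (1 + w l) := by
  induction n, hmn using Nat.le_induction with
  | base => simp
  | succ n hmn ih =>
    have hn : n ∈ Ico m (n + 1) := mem_Ico.mpr ⟨hmn, n.lt_succ_self⟩
    have hsub : Ico m n ⊆ Ico m (n + 1) := Ico_subset_Ico_right n.le_succ
    have hwn := hw n hn
    have ih := ih (fun i hi ↦ hw i (hsub hi)) (fun i hi ↦ hx i (hsub hi))
    rw [sum_Ico_succ_top hmn, prod_Ico_succ_top hmn]
    calc c + (∑ l ∈ Ico m n, x l * w l + x n * w n)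
        ≤ (c + ∑ l ∈ Ico m n, x l * w l) * (1 + w n) := by nlinarith [hx n hn]
      _ ≤ c * ((∏ l ∈ Ico m n, (1 + w l)) * (1 + w n)) := by
        rw [← mul_assoc]; gcongr

theorem Real.prod_one_add_le_exp_sum_of_nonneg {ι : Type*} {s : Finset ι} {f : ι → ℝ}
    (hf : ∀ i ∈ s, 0 ≤ f i) : ∏ i ∈ s, (1 + f i) ≤ Real.exp (∑ i ∈ s, f i) := by
  rw [Real.exp_sum]
  exact prod_le_prod (fun i hi ↦ by linarith [hf i hi])
    fun i _ ↦ by linarith [Real.add_one_le_exp (f i)]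

theorem mul_div_add_div_lt_of_lt {Ck α β t T : ℝ} (hCk : 0 < Ck) (hα : 0 ≤ α) (hβ : 0 < β)
    (ht : 0 < t) (h : t < Ck + (α + β) * T) :
    (Ck + α * T) * ((α / β + 1) / (Ck / t + α / β)) < Ck + (α + β) * T := by
  have hbound : (α / β + 1) / (Ck / t + α / β) = (α + β) * t / (β * Ck + α * t) := by
    field_simp
  rw [hbound, mul_div_assoc', div_lt_iff₀ (by positivity)]
  nlinarith [mul_lt_mul_of_pos_left h (mul_pos hβ hCk)]

theorem k2u_logarithmic_form
    (k : ℕ) (hk : 2 ≤ k) (Ck α β : ℝ)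
    (hCk : 0 < Ck) (hα : 0 < α) (hβ : 0 < β)
    (t U a b : ℕ → ℝ)
    (ht1 : 0 < t 1)
    (hmono : ∀ i ∈ Finset.Icc 1 k, ∀ j ∈ Finset.Icc 1 k, i ≤ j → t i ≤ t j)
    (hU : ∀ i ∈ Finset.Icc 1 (k - 1), 0 < U i)
    (ha : ∀ i ∈ Finset.Icc 1 (k - 1), 0 < a i ∧ a i ≤ α)
    (hb : ∀ i ∈ Finset.Icc 1 (k - 1), 0 < b i ∧ b i ≤ β)
    (hcond : β * ∑ i ∈ Finset.Icc 1 (k - 1), U i ≤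
      Real.log ((α / β + 1) / (Ck / t k + α / β))) :
    ∃ j ∈ Finset.Icc 1 k,
      Ck + (∑ i ∈ Finset.Icc 1 (k - 1), a i * t i * U i)
        + (∑ i ∈ Finset.Icc 1 (j - 1), b i * t i * U i) ≤ t j := by
  by_contra! hfail
  have hIcc : ∀ j, Icc 1 (j - 1) = Ico 1 j := fun j ↦ by ext; simp only [mem_Icc, mem_Ico]; omega
  simp only [hIcc] at hU ha hb hcond hfail
  simp only [mul_assoc] at hfail
  have hk_mem : k ∈ Icc 1 k := mem_Icc.mpr ⟨by omega, le_rfl⟩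
  have ht : ∀ i ∈ Icc 1 k, 0 < t i := fun i hi ↦
    ht1.trans_le (hmono 1 (mem_Icc.mpr ⟨le_rfl, by omega⟩) i hi (mem_Icc.mp hi).1)
  have htU : ∀ i ∈ Ico 1 k, 0 ≤ t i * U i := fun i hi ↦
    (mul_pos (ht i (Ico_subset_Icc_self hi)) (hU i hi)).le
  have hβU : ∀ i ∈ Ico 1 k, 0 ≤ β * U i := fun i hi ↦ (mul_pos hβ (hU i hi)).le
  have hβsum : ∀ j, ∑ i ∈ Ico 1 j, t i * (β * U i) = β * ∑ i ∈ Ico 1 j, t i * U i := fun j ↦ by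
    simp only [mul_sum, mul_left_comm]
  set T := ∑ i ∈ Ico 1 k, t i * U i
  have hD : ∀ j ∈ Icc 1 k, t j < Ck + α * T + ∑ i ∈ Ico 1 j, t i * (β * U i) := by
    intro j hj
    have hsub : Ico 1 j ⊆ Ico 1 k := Ico_subset_Ico_right (mem_Icc.mp hj).2
    linarith [hfail j hj, hβsum j, sum_mul_le_mul_sum_of_le (fun i hi ↦ (ha i hi).2) htU,
      sum_mul_le_mul_sum_of_le (fun i hi ↦ (hb i (hsub hi)).2) fun i hi ↦ htU i (hsub hi)]
  have hgronwall := add_sum_mul_le_mul_prod_one_add (c := Ck + α * T) (by omega : 1 ≤ k) hβU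
    fun i hi ↦ (hD i (Ico_subset_Icc_self hi)).le
  have htk : 0 < t k := ht k hk_mem
  have hprod : ∏ i ∈ Ico 1 k, (1 + β * U i) ≤ (α / β + 1) / (Ck / t k + α / β) := by
    refine (Real.prod_one_add_le_exp_sum_of_nonneg hβU).trans ?_
    rw [← mul_sum]
    exact (Real.le_log_iff_exp_le (by positivity)).mp hcond
  have hlt := mul_div_add_div_lt_of_lt (T := T) hCk hα.le hβ htk (by linarith [hD k hk_mem, hβsum k])
  have hT : 0 ≤ T := sum_nonneg htU
  linarith [hβsum k, mul_le_mul_of_nonneg_left hprod (by positivity : 0 ≤ Ck + α * T)]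
end

section
/- Let k ≥ 2 be an integer and C_k > 0 a real. Suppose given reals t_1, …, t_k with 0 < t_1 ≤ t_2 ≤ ⋯ ≤ t_k, and for each i = 1, …, k−1 reals U_i > 0, α_i > 0, and β_i > 0. If 0 < C_k/t_k ≤ 1 − Σ_{i=1}^{k−1} U_i·(α_i + β_i)/∏_{j=i}^{k−1}(β_j·U_j + 1), then there exists an index j ∈ {1, …, k} such that C_k + Σ_{i=1}^{k−1} α_i·t_i·U_i + Σ_{i=1}^{j−1} β_i·t_i·U_i ≤ t_j. -/
/-!
Write `cᵢ = αᵢUᵢ`, `γᵢ = βᵢUᵢ`, `Pₘ = ∏_{i ≤ m} (1 + γᵢ)`, `D = C_k + ∑_{i<k} cᵢtᵢ` and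
`Bⱼ = ∑_{i<j} γᵢtᵢ`. If every test point fails, `tⱼ < D + Bⱼ`, then
`D + B_{j+1} = D + Bⱼ + γⱼtⱼ ≤ (D + Bⱼ)(1 + γⱼ)`, so `D + Bⱼ ≤ D·P_{j-1}`. Feeding these bounds on
the `tᵢ` back into `D` gives `D·(1 - ∑ᵢ cᵢP_{i-1}) ≤ C_k`, while `t_k < D·P_{k-1}`. The hypothesis
on `C_k / t_k` says exactly `C_k ≤ t_k·(1 - ∑ᵢ cᵢP_{i-1}) / P_{k-1}`, a contradiction.
-/

open Finset

theorem one_sub_sum_div_prod_Icc_eq (c γ : ℕ → ℝ) (n : ℕ)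
    (hγ : ∀ i ∈ Icc 1 n, γ i + 1 ≠ 0) :
    1 - ∑ i ∈ Icc 1 n, (c i + γ i) / ∏ j ∈ Icc i n, (γ j + 1)
      = (1 - ∑ i ∈ Icc 1 n, c i * ∏ j ∈ Icc 1 (i - 1), (γ j + 1))
          / ∏ j ∈ Icc 1 n, (γ j + 1) := by
  induction n with
  | zero => simp
  | succ n ih =>
    have hlast : γ (n + 1) + 1 ≠ 0 := hγ (n + 1) (by simp)
    have hP : ∏ j ∈ Icc 1 n, (γ j + 1) ≠ 0 :=
      prod_ne_zero_iff.mpr fun j hj => hγ j (Icc_subset_Icc_right n.le_succ hj)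
    have hsplit : ∀ i ∈ Icc 1 n, (c i + γ i) / ∏ j ∈ Icc i (n + 1), (γ j + 1)
        = (c i + γ i) / (∏ j ∈ Icc i n, (γ j + 1)) / (γ (n + 1) + 1) := fun i hi => by
      rw [prod_Icc_succ_top (by grind), div_div]
    have hprev : ∑ i ∈ Icc 1 n, (c i + γ i) / ∏ j ∈ Icc i n, (γ j + 1)
        = 1 - (1 - ∑ i ∈ Icc 1 n, c i * ∏ j ∈ Icc 1 (i - 1), (γ j + 1))
          / ∏ j ∈ Icc 1 n, (γ j + 1) := by
      linarith [ih fun i hi => hγ i (Icc_subset_Icc_right n.le_succ hi)]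
    rw [sum_Icc_succ_top (by omega), sum_congr rfl hsplit, ← sum_div, hprev, Icc_self,
      prod_singleton, sum_Icc_succ_top (by omega), prod_Icc_succ_top (by omega), Nat.add_sub_cancel]
    field_simp
    ring

theorem add_sum_mul_le_mul_prod (D : ℝ) (t γ : ℕ → ℝ) (n : ℕ)
    (hγ : ∀ i ∈ Icc 1 n, 0 ≤ γ i)
    (ht : ∀ i ∈ Icc 1 n, t i ≤ D + ∑ l ∈ Icc 1 (i - 1), γ l * t l) :
    ∀ m ≤ n, D + ∑ l ∈ Icc 1 m, γ l * t l ≤ D * ∏ l ∈ Icc 1 m, (γ l + 1) := by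
  intro m hm
  induction m with
  | zero => simp
  | succ m ih =>
    have hmem : m + 1 ∈ Icc 1 n := mem_Icc.mpr ⟨by omega, hm⟩
    have hstep := ht (m + 1) hmem
    rw [Nat.add_sub_cancel] at hstep
    rw [sum_Icc_succ_top (by omega), prod_Icc_succ_top (by omega)]
    calc D + (∑ l ∈ Icc 1 m, γ l * t l + γ (m + 1) * t (m + 1))
        ≤ (D + ∑ l ∈ Icc 1 m, γ l * t l) * (γ (m + 1) + 1) := by
          linarith [mul_le_mul_of_nonneg_left hstep (hγ _ hmem)]
      _ ≤ D * (∏ l ∈ Icc 1 m, (γ l + 1)) * (γ (m + 1) + 1) :=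
          mul_le_mul_of_nonneg_right (ih (by omega)) (by linarith [hγ _ hmem])
      _ = D * ((∏ l ∈ Icc 1 m, (γ l + 1)) * (γ (m + 1) + 1)) := mul_assoc _ _ _

theorem exists_le_add_sum_of_le_mul (n : ℕ) (C : ℝ) (t c γ : ℕ → ℝ)
    (hc : ∀ i ∈ Icc 1 n, 0 ≤ c i) (hγ : ∀ i ∈ Icc 1 n, 0 ≤ γ i)
    (hr : 0 < (1 - ∑ i ∈ Icc 1 n, c i * ∏ j ∈ Icc 1 (i - 1), (γ j + 1))
          / ∏ j ∈ Icc 1 n, (γ j + 1))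
    (hC : C ≤ t (n + 1) * ((1 - ∑ i ∈ Icc 1 n, c i * ∏ j ∈ Icc 1 (i - 1), (γ j + 1))
          / ∏ j ∈ Icc 1 n, (γ j + 1))) :
    ∃ j ∈ Icc 1 (n + 1),
      C + ∑ i ∈ Icc 1 n, c i * t i + ∑ i ∈ Icc 1 (j - 1), γ i * t i ≤ t j := by
  set D := C + ∑ i ∈ Icc 1 n, c i * t i
  set S := ∑ i ∈ Icc 1 n, c i * ∏ j ∈ Icc 1 (i - 1), (γ j + 1)
  set P := ∏ j ∈ Icc 1 n, (γ j + 1)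
  by_contra! hfail
  have hgrowth := add_sum_mul_le_mul_prod D t γ n hγ fun i hi =>
    (hfail i (Icc_subset_Icc_right n.le_succ hi)).le
  have htk : t (n + 1) < D * P := by
    simpa using (hfail (n + 1) (by simp)).trans_le (hgrowth n le_rfl)
  have hD : D * (1 - S) ≤ C := by
    have hsum : ∑ i ∈ Icc 1 n, c i * t i ≤ ∑ i ∈ Icc 1 n, c i * (D * ∏ j ∈ Icc 1 (i - 1), (γ j + 1)) :=
      sum_le_sum fun i hi => mul_le_mul_of_nonneg_left
        ((hfail i (Icc_subset_Icc_right n.le_succ hi)).le.trans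
          (hgrowth (i - 1) (by grind))) (hc i hi)
    simp only [mul_left_comm _ D, ← mul_sum] at hsum
    linarith
  have hP : 0 < P := prod_pos fun j hj => by linarith [hγ j hj]
  have hlt : t (n + 1) * ((1 - S) / P) < D * (1 - S) := by
    calc t (n + 1) * ((1 - S) / P) < D * P * ((1 - S) / P) := mul_lt_mul_of_pos_right htk hr
      _ = D * (1 - S) := by field_simp
  linarith

theorem k2u_general_form_general
    (k : ℕ) (hk : 2 ≤ k) (Ck : ℝ) (hCk : 0 < Ck)
    (t U a b : ℕ → ℝ)
    (hU : ∀ i ∈ Finset.Icc 1 (k - 1), 0 < U i)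
    (ha : ∀ i ∈ Finset.Icc 1 (k - 1), 0 < a i)
    (hb : ∀ i ∈ Finset.Icc 1 (k - 1), 0 < b i)
    (hpos : 0 < Ck / t k)
    (hcond : Ck / t k ≤ 1 - ∑ i ∈ Finset.Icc 1 (k - 1),
      U i * (a i + b i) / (∏ j ∈ Finset.Icc i (k - 1), (b j * U j + 1))) :
    ∃ j ∈ Finset.Icc 1 k,
      Ck + (∑ i ∈ Finset.Icc 1 (k - 1), a i * t i * U i)
        + (∑ i ∈ Finset.Icc 1 (j - 1), b i * t i * U i) ≤ t j := by
  obtain ⟨n, rfl⟩ : ∃ n, k = n + 1 := ⟨k - 1, by omega⟩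
  rw [Nat.add_sub_cancel] at hU ha hb hcond ⊢
  have htk : 0 < t (n + 1) := (div_pos_iff_of_pos_left hCk).mp hpos
  have hbU : ∀ i ∈ Icc 1 n, 0 ≤ b i * U i := fun i hi => (mul_pos (hb i hi) (hU i hi)).le
  have hr : Ck / t (n + 1) ≤ (1 - ∑ i ∈ Icc 1 n, a i * U i * ∏ j ∈ Icc 1 (i - 1), (b j * U j + 1))
      / ∏ j ∈ Icc 1 n, (b j * U j + 1) := by
    rw [← one_sub_sum_div_prod_Icc_eq _ _ n fun i hi => by linarith [hbU i hi]]
    convert hcond using 4 with i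
    ring
  obtain ⟨j, hj, hle⟩ := exists_le_add_sum_of_le_mul n Ck t (fun i => a i * U i)
    (fun i => b i * U i) (fun i hi => (mul_pos (ha i hi) (hU i hi)).le) hbU
    (hpos.trans_le hr) ((div_le_iff₀' htk).mp hr)
  exact ⟨j, hj, by simpa only [mul_right_comm _ (t _)] using hle⟩

theorem k2u_general_form
    (k : ℕ) (hk : 2 ≤ k) (Ck : ℝ) (hCk : 0 < Ck)
    (t U a b : ℕ → ℝ)
    (ht1 : 0 < t 1)
    (hmono : ∀ i ∈ Finset.Icc 1 k, ∀ j ∈ Finset.Icc 1 k, i ≤ j → t i ≤ t j)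
    (hU : ∀ i ∈ Finset.Icc 1 (k - 1), 0 < U i)
    (ha : ∀ i ∈ Finset.Icc 1 (k - 1), 0 < a i)
    (hb : ∀ i ∈ Finset.Icc 1 (k - 1), 0 < b i)
    (hpos : 0 < Ck / t k)
    (hcond : Ck / t k ≤ 1 - ∑ i ∈ Finset.Icc 1 (k - 1),
      U i * (a i + b i) / (∏ j ∈ Finset.Icc i (k - 1), (b j * U j + 1))) :
    ∃ j ∈ Finset.Icc 1 k,
      Ck + (∑ i ∈ Finset.Icc 1 (k - 1), a i * t i * U i)
        + (∑ i ∈ Finset.Icc 1 (j - 1), b i * t i * U i) ≤ t j :=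
  k2u_general_form_general k hk Ck hCk t U a b hU ha hb hpos hcond
end

section
/- Let k ≥ 2 be an integer, σ > 0, b ≥ 0, D_k > 0, and C_k' > 0 be reals. For each i = 1, …, k−1, let T_i > 0 and C_i > 0 be the period and execution time of a higher-priority task with T_i < D_k, and set U_i = C_i/T_i, g_i = ⌈D_k/T_i⌉ − 1 (an integer ≥ 1), and t_i = g_i·T_i. Also set t_k = D_k. Assume the tasks are indexed so that t_1 ≤ t_2 ≤ ⋯ ≤ t_{k−1}. Define α_i = σ·(g_i + b)/g_i and β_i = σ/g_i for i = 1, …, k−1. Then (1) for every i, 0 < α_i ≤ σ·(1+b) and 0 < β_i ≤ σ; and (2) for every j ∈ {1, …, k}, C_k' + Σ_{i=1}^{k−1} σ·(⌈t_j/T_i⌉·C_i + b·C_i) ≤ C_k' + Σ_{i=1}^{k−1} α_i·t_i·U_i + Σ_{i=1}^{j−1} β_i·t_i·U_i. Consequently, if there exists j ∈ {1, …, k} with C_k' + Σ_{i=1}^{k−1} α_i·t_i·U_i + Σ_{i=1}^{j−1} β_i·t_i·U_i ≤ t_j, then there exists t with 0 < t ≤ D_k and C_k' + Σ_{i=1}^{k−1}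 σ·(⌈t/T_i⌉·C_i + b·C_i) ≤ t. -/
/-!
A window of length `t_j ≤ D_k` contains at most `⌈D_k/T_i⌉ = g_i + 1` releases of task `i`, and
at most `g_i` of them when `i ≥ j`, because then `t_j ≤ t_i = g_i T_i`. Since
`α_i t_i U_i = σ (g_i + b) C_i` and `β_i t_i U_i = σ C_i`, the `α`-sum pays for `g_i` releases
plus the `b C_i` term and the `β`-sum for the extra release of each task `i < j`.
The test is then witnessed by `t = t_j`.
-/

open Finset

namespace ConstantInflation

theorem one_le_ceil_div_sub_one {D T : ℝ} (hT : 0 < T) (hTD : T < D) : 1 ≤ ⌈D / T⌉ - 1 := by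
  have : (1 : ℤ) < ⌈D / T⌉ := Int.lt_ceil.mpr (by exact_mod_cast (one_lt_div hT).mpr hTD)
  omega

theorem ceil_div_sub_one_mul_lt {D T : ℝ} (hT : 0 < T) : ((⌈D / T⌉ - 1 : ℤ) : ℝ) * T < D := by
  have : ((⌈D / T⌉ - 1 : ℤ) : ℝ) < D / T := by
    push_cast
    linarith [Int.ceil_lt_add_one (D / T)]
  rwa [lt_div_iff₀ hT] at this

theorem ceil_div_le_add_ite {s D T : ℝ} {g : ℤ} (hT : 0 < T) (hg : g = ⌈D / T⌉ - 1)
    (hsD : s ≤ D) (p : Prop) [Decidable p] (hnp : ¬p → s ≤ g * T) :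
    (⌈s / T⌉ : ℝ) ≤ g + if p then 1 else 0 := by
  split_ifs with hp
  · have : ⌈s / T⌉ ≤ ⌈D / T⌉ := Int.ceil_mono (div_le_div_of_nonneg_right hsD hT.le)
    rw [hg]
    exact_mod_cast (by omega : ⌈s / T⌉ ≤ ⌈D / T⌉ - 1 + 1)
  · rw [add_zero]
    exact_mod_cast Int.ceil_le.mpr ((div_le_iff₀ hT).mpr (hnp hp))

theorem inflation_factors_bounds {σ b g : ℝ} (hσ : 0 < σ) (hb : 0 ≤ b) (hg : 1 ≤ g) :
    (0 < σ * (g + b) / g ∧ σ * (g + b) / g ≤ σ * (1 + b)) ∧ (0 < σ / g ∧ σ / g ≤ σ) := by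
  have hg0 : 0 < g := by linarith
  refine ⟨⟨by positivity, ?_⟩, ⟨by positivity, ?_⟩⟩
  · rw [div_le_iff₀ hg0]
    nlinarith [mul_nonneg (mul_nonneg hσ.le hb) (sub_nonneg.mpr hg)]
  · rw [div_le_iff₀ hg0]
    nlinarith

theorem demand_le_inflated_of_ceil_le {σ b g T C n : ℝ} (hσ : 0 ≤ σ) (hC : 0 ≤ C)
    (hg : g ≠ 0) (hT : T ≠ 0) (p : Prop) [Decidable p] (hn : n ≤ g + if p then 1 else 0) :
    σ * (n * C + b * C)
      ≤ σ * (g + b) / g * (g * T) * (C / T) + if p then σ / g * (g * T) * (C / T) else 0 := by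
  have hα : σ * (g + b) / g * (g * T) * (C / T) = σ * (g + b) * C := by field_simp
  have hβ : σ / g * (g * T) * (C / T) = σ * C := by field_simp
  rw [hα, hβ]
  split_ifs at hn ⊢ <;> nlinarith [mul_nonneg hσ hC]

theorem sum_Icc_le_sum_add_sum_Icc_pred {f a c : ℕ → ℝ} {n j : ℕ} (hj : j ≤ n + 1)
    (h : ∀ i ∈ Icc 1 n, f i ≤ a i + if i < j then c i else 0) :
    ∑ i ∈ Icc 1 n, f i ≤ ∑ i ∈ Icc 1 n, a i + ∑ i ∈ Icc 1 (j - 1), c i := by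
  have hc : ∑ i ∈ Icc 1 (j - 1), c i = ∑ i ∈ Icc 1 n, if i < j then c i else 0 := by
    rw [← sum_filter]
    congr 1
    ext i
    simp only [mem_Icc, mem_filter]
    omega
  rw [hc, ← sum_add_distrib]
  exact sum_le_sum h

end ConstantInflation

open ConstantInflation in
theorem constant_inflation_k2u_parameters_general
    (k : ℕ) (σ b Dk Ck' : ℝ)
    (hσ : 0 < σ) (hb : 0 ≤ b) (hDk : 0 < Dk)
    (T C : ℕ → ℝ)
    (hT : ∀ i ∈ Finset.Icc 1 (k - 1), 0 < T i)
    (hC : ∀ i ∈ Finset.Icc 1 (k - 1), 0 < C i)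
    (hTD : ∀ i ∈ Finset.Icc 1 (k - 1), T i < Dk)
    (U : ℕ → ℝ) (hU : ∀ i ∈ Finset.Icc 1 (k - 1), U i = C i / T i)
    (g : ℕ → ℤ) (hg : ∀ i ∈ Finset.Icc 1 (k - 1), g i = ⌈Dk / T i⌉ - 1)
    (t : ℕ → ℝ) (ht : ∀ i ∈ Finset.Icc 1 (k - 1), t i = (g i : ℝ) * T i)
    (htk : t k = Dk)
    (hmono : ∀ i ∈ Finset.Icc 1 (k - 1), ∀ j ∈ Finset.Icc 1 (k - 1), i ≤ j → t i ≤ t j)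
    (A B : ℕ → ℝ)
    (hA : ∀ i ∈ Finset.Icc 1 (k - 1), A i = σ * ((g i : ℝ) + b) / (g i : ℝ))
    (hB : ∀ i ∈ Finset.Icc 1 (k - 1), B i = σ / (g i : ℝ)) :
    (∀ i ∈ Finset.Icc 1 (k - 1), 1 ≤ g i) ∧
    (∀ i ∈ Finset.Icc 1 (k - 1),
      (0 < A i ∧ A i ≤ σ * (1 + b)) ∧ (0 < B i ∧ B i ≤ σ)) ∧
    (∀ j ∈ Finset.Icc 1 k,
      Ck' + ∑ i ∈ Finset.Icc 1 (k - 1), σ * ((⌈t j / T i⌉ : ℝ) * C i + b * C i)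
        ≤ Ck' + (∑ i ∈ Finset.Icc 1 (k - 1), A i * t i * U i)
            + (∑ i ∈ Finset.Icc 1 (j - 1), B i * t i * U i)) ∧
    ((∃ j ∈ Finset.Icc 1 k,
        Ck' + (∑ i ∈ Finset.Icc 1 (k - 1), A i * t i * U i)
          + (∑ i ∈ Finset.Icc 1 (j - 1), B i * t i * U i) ≤ t j) →
      ∃ t' : ℝ, 0 < t' ∧ t' ≤ Dk ∧
        Ck' + ∑ i ∈ Finset.Icc 1 (k - 1), σ * ((⌈t' / T i⌉ : ℝ) * C i + b * C i) ≤ t') := by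
  have hg1 (i) (hi : i ∈ Icc 1 (k - 1)) : 1 ≤ g i :=
    hg i hi ▸ one_le_ceil_div_sub_one (hT i hi) (hTD i hi)
  have hg1' (i) (hi : i ∈ Icc 1 (k - 1)) : (1 : ℝ) ≤ g i := by exact_mod_cast hg1 i hi
  have hwindow (j) (hj : j ∈ Icc 1 k) : 0 < t j ∧ t j ≤ Dk := by
    by_cases hjk : j = k
    · rw [hjk, htk]
      exact ⟨hDk, le_rfl⟩
    have hj' : j ∈ Icc 1 (k - 1) := by simp only [mem_Icc] at hj ⊢; omega
    rw [ht j hj']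
    exact ⟨mul_pos (by linarith [hg1' j hj']) (hT j hj'),
      (hg j hj' ▸ ceil_div_sub_one_mul_lt (hT j hj')).le⟩
  have hdemand (j) (hj : j ∈ Icc 1 k) :
      Ck' + ∑ i ∈ Icc 1 (k - 1), σ * ((⌈t j / T i⌉ : ℝ) * C i + b * C i)
        ≤ Ck' + (∑ i ∈ Icc 1 (k - 1), A i * t i * U i)
            + (∑ i ∈ Icc 1 (j - 1), B i * t i * U i) := by
    rw [add_assoc]
    gcongr
    refine sum_Icc_le_sum_add_sum_Icc_pred (by simp only [mem_Icc] at hj; omega) fun i hi => ?_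
    rw [hA i hi, hB i hi, ht i hi, hU i hi]
    refine demand_le_inflated_of_ceil_le hσ.le (hC i hi).le (by linarith [hg1' i hi])
      (hT i hi).ne' _ (ceil_div_le_add_ite (hT i hi) (hg i hi) (hwindow j hj).2 _ fun hij => ?_)
    have hj' : j ∈ Icc 1 (k - 1) := by simp only [mem_Icc] at hj hi ⊢; omega
    exact ht i hi ▸ hmono j hj' i hi (not_lt.mp hij)
  refine ⟨hg1, fun i hi => hA i hi ▸ hB i hi ▸ inflation_factors_bounds hσ hb (hg1' i hi),
    hdemand, ?_⟩
  rintro ⟨j, hj, hle⟩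
  exact ⟨t j, (hwindow j hj).1, (hwindow j hj).2, (hdemand j hj).trans hle⟩

theorem constant_inflation_k2u_parameters
    (k : ℕ) (hk : 2 ≤ k) (σ b Dk Ck' : ℝ)
    (hσ : 0 < σ) (hb : 0 ≤ b) (hDk : 0 < Dk) (hCk' : 0 < Ck')
    (T C : ℕ → ℝ)
    (hT : ∀ i ∈ Finset.Icc 1 (k - 1), 0 < T i)
    (hC : ∀ i ∈ Finset.Icc 1 (k - 1), 0 < C i)
    (hTD : ∀ i ∈ Finset.Icc 1 (k - 1), T i < Dk)
    (U : ℕ → ℝ) (hU : ∀ i ∈ Finset.Icc 1 (k - 1), U i = C i / T i)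
    (g : ℕ → ℤ) (hg : ∀ i ∈ Finset.Icc 1 (k - 1), g i = ⌈Dk / T i⌉ - 1)
    (t : ℕ → ℝ) (ht : ∀ i ∈ Finset.Icc 1 (k - 1), t i = (g i : ℝ) * T i)
    (htk : t k = Dk)
    (hmono : ∀ i ∈ Finset.Icc 1 (k - 1), ∀ j ∈ Finset.Icc 1 (k - 1), i ≤ j → t i ≤ t j)
    (A B : ℕ → ℝ)
    (hA : ∀ i ∈ Finset.Icc 1 (k - 1), A i = σ * ((g i : ℝ) + b) / (g i : ℝ))
    (hB : ∀ i ∈ Finset.Icc 1 (k - 1), B i = σ / (g i : ℝ)) :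
    (∀ i ∈ Finset.Icc 1 (k - 1), 1 ≤ g i) ∧
    (∀ i ∈ Finset.Icc 1 (k - 1),
      (0 < A i ∧ A i ≤ σ * (1 + b)) ∧ (0 < B i ∧ B i ≤ σ)) ∧
    (∀ j ∈ Finset.Icc 1 k,
      Ck' + ∑ i ∈ Finset.Icc 1 (k - 1), σ * ((⌈t j / T i⌉ : ℝ) * C i + b * C i)
        ≤ Ck' + (∑ i ∈ Finset.Icc 1 (k - 1), A i * t i * U i)
            + (∑ i ∈ Finset.Icc 1 (j - 1), B i * t i * U i)) ∧
    ((∃ j ∈ Finset.Icc 1 k,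
        Ck' + (∑ i ∈ Finset.Icc 1 (k - 1), A i * t i * U i)
          + (∑ i ∈ Finset.Icc 1 (j - 1), B i * t i * U i) ≤ t j) →
      ∃ t' : ℝ, 0 < t' ∧ t' ≤ Dk ∧
        Ck' + ∑ i ∈ Finset.Icc 1 (k - 1), σ * ((⌈t' / T i⌉ : ℝ) * C i + b * C i) ≤ t') :=
  constant_inflation_k2u_parameters_general k σ b Dk Ck' hσ hb hDk T C hT hC hTD U hU g hg t ht htk
    hmono A B hA hB
end

section
/- Let k ≥ 2 be an integer, σ > 0, b ≥ 0, D_k > 0, and C_k' be reals. For each i = 1, …, k−1, let T_i > 0 and C_i > 0 be reals with T_i < D_k, set U_i = C_i/T_i, g_i = ⌈D_k/T_i⌉ − 1, and t_i = g_i·T_i, and assume t_1 ≤ t_2 ≤ ⋯ ≤ t_{k−1} ≤ t_k := D_k. Then for every j ∈ {1, …, k}: C_k' + Σ_{i=1}^{k−1} σ·(⌈t_j/T_i⌉·C_i + b·C_i) ≤ C_k' + Σ_{i=1}^{k−1} (σ·(g_i + b)/g_i)·t_i·U_i + Σ_{i=1}^{j−1} (σ/g_i)·t_i·U_i, and moreover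 Σ_{i=1}^{k−1} σ·(g_i·C_i + b·C_i) + Σ_{i=1}^{j−1} σ·C_i = Σ_{i=1}^{k−1} (σ·(g_i + b)/g_i)·t_i·U_i + Σ_{i=1}^{j−1} (σ/g_i)·t_i·U_i. -/
/-!
Write `g = ⌈D/T⌉ - 1 ≥ 1` and `t = g T` for each higher-priority task, so that `C = t U / g`.
A test point `t_j` never exceeds `D`, so task `i` contributes at most `g_i + 1` jobs there, and
only `g_i` jobs when `i ≥ j`, because then `t_j ≤ t_i = g_i T_i`. The excess over `g_i` jobs is
therefore one extra job `σ C_i = (σ / g_i) t_i U_i` for each `i < j`.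
-/

open Finset

lemma one_le_ceil_div_sub_one {T D : ℝ} (hT : 0 < T) (hTD : T < D) : 1 ≤ ⌈D / T⌉ - 1 := by
  have h : ((1 : ℤ) : ℝ) < D / T := by exact_mod_cast (one_lt_div hT).mpr hTD
  have := Int.lt_ceil.mpr h
  omega

lemma ceil_div_le_of_le_mul {t T : ℝ} {g : ℤ} (hT : 0 < T) (h : t ≤ g * T) : ⌈t / T⌉ ≤ g :=
  Int.ceil_le.mpr ((div_le_iff₀ hT).mpr h)

lemma div_mul_mul_eq_mul {a g T C t U : ℝ} (hg : g ≠ 0) (hT : T ≠ 0) (ht : t = g * T)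
    (hU : U = C / T) : a / g * t * U = a * C := by
  subst ht hU
  field_simp

lemma Icc_one_eq_Ioc_zero (n : ℕ) : Icc 1 n = Ioc 0 n :=
  Icc_add_one_left_eq_Ioc 0 n

lemma sum_Icc_le_sum_Icc_add_sum_Icc_pred {M : Type*} [AddCommMonoid M] [PartialOrder M]
    [IsOrderedAddMonoid M] {f g h : ℕ → M} {j n : ℕ} (hj : 1 ≤ j)
    (hjn : j ≤ n + 1) (hlow : ∀ i ∈ Icc 1 (j - 1), f i ≤ g i + h i)
    (hhigh : ∀ i ∈ Icc j n, f i ≤ g i) :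
    ∑ i ∈ Icc 1 n, f i ≤ ∑ i ∈ Icc 1 n, g i + ∑ i ∈ Icc 1 (j - 1), h i := by
  have hIcc : Icc j n = Ioc (j - 1) n := by
    rw [← Icc_add_one_left_eq_Ioc, Nat.sub_add_cancel hj]
  have hsplit (φ : ℕ → M) :
      ∑ i ∈ Icc 1 n, φ i = ∑ i ∈ Icc 1 (j - 1), φ i + ∑ i ∈ Icc j n, φ i := by
    rw [hIcc, Icc_one_eq_Ioc_zero, Icc_one_eq_Ioc_zero,
      sum_Ioc_consecutive _ (Nat.zero_le _) (by omega)]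
  rw [hsplit f, hsplit g, add_right_comm, ← sum_add_distrib]
  exact add_le_add (sum_le_sum hlow) (sum_le_sum hhigh)

lemma mul_ceil_mul_add_le {σ b C x : ℝ} {m : ℤ} (hσ : 0 ≤ σ) (hC : 0 ≤ C) (h : ⌈x⌉ ≤ m) :
    σ * (⌈x⌉ * C + b * C) ≤ σ * (m * C + b * C) := by
  gcongr

theorem constant_inflation_workload_bound_general
    (k : ℕ) (σ b Dk Ck' : ℝ)
    (hσ : 0 < σ)
    (T C : ℕ → ℝ)
    (hT : ∀ i ∈ Finset.Icc 1 (k - 1), 0 < T i)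
    (hC : ∀ i ∈ Finset.Icc 1 (k - 1), 0 < C i)
    (hTD : ∀ i ∈ Finset.Icc 1 (k - 1), T i < Dk)
    (U : ℕ → ℝ) (hU : ∀ i ∈ Finset.Icc 1 (k - 1), U i = C i / T i)
    (g : ℕ → ℤ) (hg : ∀ i ∈ Finset.Icc 1 (k - 1), g i = ⌈Dk / T i⌉ - 1)
    (t : ℕ → ℝ) (ht : ∀ i ∈ Finset.Icc 1 (k - 1), t i = (g i : ℝ) * T i)
    (htk : t k = Dk)
    (hmono : ∀ i ∈ Finset.Icc 1 k, ∀ j ∈ Finset.Icc 1 k, i ≤ j → t i ≤ t j) :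
    ∀ j ∈ Finset.Icc 1 k,
      (Ck' + ∑ i ∈ Finset.Icc 1 (k - 1), σ * ((⌈t j / T i⌉ : ℝ) * C i + b * C i)
        ≤ Ck' + (∑ i ∈ Finset.Icc 1 (k - 1), (σ * ((g i : ℝ) + b) / (g i : ℝ)) * t i * U i)
            + (∑ i ∈ Finset.Icc 1 (j - 1), (σ / (g i : ℝ)) * t i * U i)) ∧
      ((∑ i ∈ Finset.Icc 1 (k - 1), σ * ((g i : ℝ) * C i + b * C i))
          + (∑ i ∈ Finset.Icc 1 (j - 1), σ * C i)
        = (∑ i ∈ Finset.Icc 1 (k - 1), (σ * ((g i : ℝ) + b) / (g i : ℝ)) * t i * U i)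
            + (∑ i ∈ Finset.Icc 1 (j - 1), (σ / (g i : ℝ)) * t i * U i)) := by
  intro j hj
  obtain ⟨hj1, hjk⟩ := mem_Icc.mp hj
  have hsub : Icc 1 (j - 1) ⊆ Icc 1 (k - 1) := Icc_subset_Icc_right (by omega)
  have hcost (i : ℕ) (hi : i ∈ Icc 1 (k - 1)) (a : ℝ) : a / g i * t i * U i = a * C i := by
    have hg1 : (1 : ℝ) ≤ g i := by
      exact_mod_cast hg i hi ▸ one_le_ceil_div_sub_one (hT i hi) (hTD i hi)
    exact div_mul_mul_eq_mul (by positivity) (hT i hi).ne' (ht i hi) (hU i hi)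
  have hfull : ∀ i ∈ Icc 1 (k - 1),
      σ * ((g i : ℝ) * C i + b * C i) = (σ * ((g i : ℝ) + b) / (g i : ℝ)) * t i * U i :=
    fun i hi => by rw [hcost i hi]; ring
  have hextra : ∀ i ∈ Icc 1 (j - 1), σ * C i = (σ / (g i : ℝ)) * t i * U i :=
    fun i hi => (hcost i (hsub hi) σ).symm
  rw [← sum_congr rfl hfull, ← sum_congr rfl hextra, add_assoc, add_le_add_iff_left]
  refine ⟨?_, rfl⟩
  refine sum_Icc_le_sum_Icc_add_sum_Icc_pred hj1 (by omega) (fun i hi => ?_) (fun i hi => ?_)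
  · have hi' := hsub hi
    have hceil : ⌈t j / T i⌉ ≤ g i + 1 := by
      rw [hg i hi', sub_add_cancel, ← htk]
      exact Int.ceil_mono <| div_le_div_of_nonneg_right
        (hmono j hj k (mem_Icc.mpr ⟨by omega, le_rfl⟩) hjk) (hT i hi').le
    calc σ * ((⌈t j / T i⌉ : ℝ) * C i + b * C i)
        ≤ σ * (((g i + 1 : ℤ) : ℝ) * C i + b * C i) := mul_ceil_mul_add_le hσ.le (hC i hi').le hceil
      _ = σ * ((g i : ℝ) * C i + b * C i) + σ * C i := by push_cast; ring
  · obtain ⟨hji, hik⟩ := mem_Icc.mp hi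
    have hi' : i ∈ Icc 1 (k - 1) := mem_Icc.mpr ⟨by omega, hik⟩
    have hceil : ⌈t j / T i⌉ ≤ g i := ceil_div_le_of_le_mul (hT i hi') <|
      ht i hi' ▸ hmono j hj i (mem_Icc.mpr ⟨by omega, by omega⟩) hji
    exact mul_ceil_mul_add_le hσ.le (hC i hi').le hceil

theorem constant_inflation_workload_bound
    (k : ℕ) (hk : 2 ≤ k) (σ b Dk Ck' : ℝ)
    (hσ : 0 < σ) (hb : 0 ≤ b) (hDk : 0 < Dk)
    (T C : ℕ → ℝ)
    (hT : ∀ i ∈ Finset.Icc 1 (k - 1), 0 < T i)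
    (hC : ∀ i ∈ Finset.Icc 1 (k - 1), 0 < C i)
    (hTD : ∀ i ∈ Finset.Icc 1 (k - 1), T i < Dk)
    (U : ℕ → ℝ) (hU : ∀ i ∈ Finset.Icc 1 (k - 1), U i = C i / T i)
    (g : ℕ → ℤ) (hg : ∀ i ∈ Finset.Icc 1 (k - 1), g i = ⌈Dk / T i⌉ - 1)
    (t : ℕ → ℝ) (ht : ∀ i ∈ Finset.Icc 1 (k - 1), t i = (g i : ℝ) * T i)
    (htk : t k = Dk)
    (hmono : ∀ i ∈ Finset.Icc 1 k, ∀ j ∈ Finset.Icc 1 k, i ≤ j → t i ≤ t j) :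
    ∀ j ∈ Finset.Icc 1 k,
      (Ck' + ∑ i ∈ Finset.Icc 1 (k - 1), σ * ((⌈t j / T i⌉ : ℝ) * C i + b * C i)
        ≤ Ck' + (∑ i ∈ Finset.Icc 1 (k - 1), (σ * ((g i : ℝ) + b) / (g i : ℝ)) * t i * U i)
            + (∑ i ∈ Finset.Icc 1 (j - 1), (σ / (g i : ℝ)) * t i * U i)) ∧
      ((∑ i ∈ Finset.Icc 1 (k - 1), σ * ((g i : ℝ) * C i + b * C i))
          + (∑ i ∈ Finset.Icc 1 (j - 1), σ * C i)
        = (∑ i ∈ Finset.Icc 1 (k - 1), (σ * ((g i : ℝ) + b) / (g i : ℝ)) * t i * U i)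
            + (∑ i ∈ Finset.Icc 1 (j - 1), (σ / (g i : ℝ)) * t i * U i)) :=
  constant_inflation_workload_bound_general k σ b Dk Ck' hσ T C hT hC hTD U hU g hg t ht htk hmono
end

section
/- Let k ≥ 2 be an integer, σ > 0, b ≥ 0, D_k > 0, and C_k > 0 be reals. Let the higher-priority tasks be partitioned into hp_1 (those with period T_i < D_k) and hp_2 (those with T_i ≥ D_k), each task having period T_i > 0, execution time C_i > 0, and utilization U_i = C_i/T_i. Set C_k' = C_k + Σ_{τ_i ∈ hp_2} σ·(1+b)·C_i. If σ·Σ_{τ_i ∈ hp_1} U_i ≤ ln( (2+b)/(C_k'/D_k + 1 + b) ), then there exists t with 0 < t ≤ D_k such that C_k + Σ_{τ_i ∈ hp_1 ∪ hp_2} σ·(⌈t/T_i⌉·C_i + b·C_i) ≤ t. -/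
/-!
Suppose every `t ∈ (0, D_k]` fails the test. Bounding the demand of each `τ_i ∈ hp₁` by its
workload `σ ⌊D_k/T_i⌋ C_i` up to `D_k`, plus one extra job once `t` passes the last release
`r_i = ⌊D_k/T_i⌋ T_i`, each failure at `t = r_i` reads `r_i < K + Σ_{r_j < r_i} σ U_j r_j`
with `K = C_k' + (1+b) S` and `S = Σ σ U_j r_j`. A discrete Grönwall argument over the `r_i` in
increasing order gives `K + S ≤ K ∏ (1 + σ U_i)`, and `∏ (1 + σ U_i) ≤ exp (σ Σ U_i)` turns the
logarithmic condition into `C_k' + (2+b) S ≤ D_k`, which contradicts the failure at `t = D_k`.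
-/

open Finset

noncomputable def lastRelease (D T : ℝ) : ℝ := ⌊D / T⌋₊ * T

lemma one_le_floor_div {D T : ℝ} (hT : 0 < T) (hTD : T ≤ D) : (1 : ℝ) ≤ ⌊D / T⌋₊ := by
  exact_mod_cast Nat.one_le_floor_iff _ |>.2 ((one_le_div hT).2 hTD)

lemma le_lastRelease {D T : ℝ} (hT : 0 < T) (hTD : T ≤ D) : T ≤ lastRelease D T := by
  have := one_le_floor_div hT hTD
  unfold lastRelease
  nlinarith

lemma lastRelease_le {D T : ℝ} (hT : 0 < T) (hD : 0 ≤ D) : lastRelease D T ≤ D :=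
  (le_div_iff₀ hT).1 (Nat.floor_le (div_nonneg hD hT.le))

lemma ceil_div_le_floor_div {D T c : ℝ} (hT : 0 < T) (hc : c ≤ lastRelease D T) :
    (⌈c / T⌉ : ℝ) ≤ ⌊D / T⌋₊ := by
  exact_mod_cast Int.ceil_le.2 (by simpa using (div_le_iff₀ hT).2 hc)

lemma ceil_div_le_floor_div_add_one {D T c : ℝ} (hT : 0 < T) (hcD : c ≤ D) :
    (⌈c / T⌉ : ℝ) ≤ ⌊D / T⌋₊ + 1 := by
  have : c / T ≤ D / T := by gcongr
  exact_mod_cast Int.ceil_le.2 (by push_cast; linarith [Nat.lt_floor_add_one (D / T)])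

lemma ceil_div_eq_one {T c : ℝ} (hc : 0 < c) (hcT : c ≤ T) : ⌈c / T⌉ = 1 := by
  have hT : 0 < T := hc.trans_le hcT
  exact Int.ceil_eq_iff.2 ⟨by norm_num; positivity, by simpa using (div_le_one hT).2 hcT⟩

lemma mul_lastRelease_eq {D T C U : ℝ} (hT : 0 < T) (hU : U = C / T) :
    U * lastRelease D T = ⌊D / T⌋₊ * C := by
  rw [hU, lastRelease]; field_simp

lemma mul_ceil_div_add_le {σ b D T C U c : ℝ} (hσ : 0 ≤ σ) (hb : 0 ≤ b) (hT : 0 < T)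
    (hC : 0 ≤ C) (hU : U = C / T) (hTD : T ≤ D) (hcD : c ≤ D) :
    σ * (⌈c / T⌉ * C + b * C) ≤ (1 + b) * (σ * U * lastRelease D T) +
      if lastRelease D T < c then σ * U * lastRelease D T else 0 := by
  have hn := one_le_floor_div hT hTD
  have hσC : 0 ≤ σ * C := mul_nonneg hσ hC
  have hbn : 0 ≤ b * (σ * C) * (⌊D / T⌋₊ - 1) := mul_nonneg (mul_nonneg hb hσC) (sub_nonneg.2 hn)
  rw [mul_assoc σ, mul_lastRelease_eq hT hU]
  split_ifs with hc
  · nlinarith [mul_le_mul_of_nonneg_left (ceil_div_le_floor_div_add_one hT hcD) hσC]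
  · nlinarith [mul_le_mul_of_nonneg_left (ceil_div_le_floor_div hT (not_lt.1 hc)) hσC]

lemma add_sum_mul_le_mul_prod_one_add_s7 {ι : Type*} [DecidableEq ι] (s : Finset ι) (t u : ι → ℝ)
    (K : ℝ) (ht : ∀ i ∈ s, 0 ≤ t i) (hu : ∀ i ∈ s, 0 ≤ u i)
    (h : ∀ i ∈ s, t i ≤ K + ∑ j ∈ s with t j < t i, u j * t j) :
    K + ∑ i ∈ s, u i * t i ≤ K * ∏ i ∈ s, (1 + u i) := by
  induction s using Finset.induction_on_max_value t with
  | empty => simp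
  | insert a s ha hmax ih =>
    have hbelow i (hi : i ∈ s) :
        (insert a s).filter (fun j => t j < t i) = s.filter (fun j => t j < t i) := by
      rw [filter_insert, if_neg (not_lt.2 (hmax i hi))]
    have ih' := ih (fun i hi => ht i (mem_insert_of_mem hi))
      (fun i hi => hu i (mem_insert_of_mem hi))
      (fun i hi => by rw [← hbelow i hi]; exact h i (mem_insert_of_mem hi))
    have hta : t a ≤ K + ∑ i ∈ s, u i * t i := by
      refine (h a (mem_insert_self a s)).trans ?_
      rw [filter_insert, if_neg (lt_irrefl _)]
      gcongr
      · exact fun i hi _ =>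
          mul_nonneg (hu i (mem_insert_of_mem hi)) (ht i (mem_insert_of_mem hi))
      · exact filter_subset _ _
    rw [sum_insert ha, prod_insert ha]
    have hua := hu a (mem_insert_self a s)
    nlinarith [mul_le_mul_of_nonneg_left (hta.trans ih') hua]

lemma sum_demand_le {ι : Type*} [DecidableEq ι] {σ b D c : ℝ} {hp1 hp2 : Finset ι}
    {T C U : ι → ℝ} (hσ : 0 ≤ σ) (hb : 0 ≤ b) (hdisj : Disjoint hp1 hp2)
    (hT : ∀ i ∈ hp1, 0 < T i) (hC : ∀ i ∈ hp1, 0 ≤ C i) (hU : ∀ i ∈ hp1, U i = C i / T i)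
    (h1 : ∀ i ∈ hp1, T i ≤ D) (h2 : ∀ i ∈ hp2, D ≤ T i) (hc : 0 < c) (hcD : c ≤ D) :
    ∑ i ∈ hp1 ∪ hp2, σ * ((⌈c / T i⌉ : ℝ) * C i + b * C i) ≤
      ∑ i ∈ hp2, σ * (1 + b) * C i + (1 + b) * ∑ i ∈ hp1, σ * U i * lastRelease D (T i) +
        ∑ i ∈ hp1 with lastRelease D (T i) < c, σ * U i * lastRelease D (T i) := by
  have hhp2 : ∑ i ∈ hp2, σ * ((⌈c / T i⌉ : ℝ) * C i + b * C i) = ∑ i ∈ hp2, σ * (1 + b) * C i :=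
    sum_congr rfl fun i hi => by rw [ceil_div_eq_one hc (hcD.trans (h2 i hi))]; push_cast; ring
  have hhp1 : ∑ i ∈ hp1, σ * ((⌈c / T i⌉ : ℝ) * C i + b * C i) ≤
      (1 + b) * ∑ i ∈ hp1, σ * U i * lastRelease D (T i) +
        ∑ i ∈ hp1 with lastRelease D (T i) < c, σ * U i * lastRelease D (T i) := by
    rw [mul_sum, sum_filter, ← sum_add_distrib]
    exact sum_le_sum fun i hi =>
      mul_ceil_div_add_le hσ hb (hT i hi) (hC i hi) (hU i hi) (h1 i hi) hcD
  rw [sum_union hdisj, hhp2]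
  linarith

lemma prod_one_add_le_of_sum_le_log {ι : Type*} {s : Finset ι} {f : ι → ℝ} {x : ℝ}
    (hf : ∀ i ∈ s, 0 ≤ f i) (hx : 0 < x) (h : ∑ i ∈ s, f i ≤ Real.log x) :
    ∏ i ∈ s, (1 + f i) ≤ x := by
  calc ∏ i ∈ s, (1 + f i)
      ≤ ∏ i ∈ s, Real.exp (f i) :=
        prod_le_prod (fun i hi => by linarith [hf i hi])
          fun i _ => by linarith [Real.add_one_le_exp (f i)]
    _ = Real.exp (∑ i ∈ s, f i) := (Real.exp_sum s f).symm
    _ ≤ x := (Real.exp_le_exp.2 h).trans (Real.exp_log hx).le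

lemma add_two_add_mul_le_of_le_mul {C b D S P : ℝ} (hC : 0 < C) (hb : 0 ≤ b) (hD : 0 < D)
    (hS : 0 ≤ S) (hgron : C + (1 + b) * S + S ≤ (C + (1 + b) * S) * P)
    (hP : P ≤ (2 + b) / (C / D + 1 + b)) :
    C + (2 + b) * S ≤ D := by
  have hK : 0 < C + (1 + b) * S := by positivity
  have hP1 : 1 ≤ P := by nlinarith
  have hPD : P * C + (1 + b) * P * D ≤ (2 + b) * D := by
    have := mul_le_mul_of_nonneg_right ((le_div_iff₀ (by positivity)).1 hP) hD.le
    have hCD : C / D * D = C := div_mul_cancel₀ _ hD.ne'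
    linear_combination this - P * hCD
  have hQ : 0 < 2 + b - (1 + b) * P := by nlinarith
  have hSQ : S * (2 + b - (1 + b) * P) ≤ C * (P - 1) := by nlinarith
  refine le_of_mul_le_mul_right ?_ hQ
  nlinarith

theorem constant_inflation_logarithmic_test_general
    {ι : Type*} [DecidableEq ι]
    (σ b Dk Ck : ℝ)
    (hσ : 0 < σ) (hb : 0 ≤ b) (hDk : 0 < Dk) (hCk : 0 < Ck)
    (hp1 hp2 : Finset ι) (hdisj : Disjoint hp1 hp2)
    (T C U : ι → ℝ)
    (hT : ∀ i ∈ hp1 ∪ hp2, 0 < T i)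
    (hC : ∀ i ∈ hp1 ∪ hp2, 0 < C i)
    (hU : ∀ i ∈ hp1 ∪ hp2, U i = C i / T i)
    (h1 : ∀ i ∈ hp1, T i < Dk)
    (h2 : ∀ i ∈ hp2, Dk ≤ T i)
    (Ck' : ℝ) (hCk' : Ck' = Ck + ∑ i ∈ hp2, σ * (1 + b) * C i)
    (hcond : σ * ∑ i ∈ hp1, U i ≤ Real.log ((2 + b) / (Ck' / Dk + 1 + b))) :
    ∃ t : ℝ, 0 < t ∧ t ≤ Dk ∧
      Ck + ∑ i ∈ hp1 ∪ hp2, σ * ((⌈t / T i⌉ : ℝ) * C i + b * C i) ≤ t := by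
  by_contra! hfail
  have hT1 i (hi : i ∈ hp1) := hT i (mem_union_left _ hi)
  have hu i (hi : i ∈ hp1) : 0 ≤ σ * U i := by
    rw [hU i (mem_union_left _ hi)]
    exact mul_nonneg hσ.le (div_pos (hC i (mem_union_left _ hi)) (hT1 i hi)).le
  have hCk'pos : 0 < Ck' := hCk' ▸ add_pos_of_pos_of_nonneg hCk
    (sum_nonneg fun i hi => by have := hC i (mem_union_right _ hi); positivity)
  set r := fun i => lastRelease Dk (T i)
  set S := ∑ i ∈ hp1, σ * U i * r i
  set P := ∏ i ∈ hp1, (1 + σ * U i)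
  have hdemand c (hc : 0 < c) (hcD : c ≤ Dk) :
      c < Ck' + (1 + b) * S + ∑ i ∈ hp1 with r i < c, σ * U i * r i := by
    have := sum_demand_le hσ.le hb hdisj hT1 (fun i hi => (hC i (mem_union_left _ hi)).le)
      (fun i hi => hU i (mem_union_left _ hi)) (fun i hi => (h1 i hi).le) h2 hc hcD
    linarith [hfail c hc hcD]
  have hr i (hi : i ∈ hp1) : 0 < r i ∧ r i ≤ Dk :=
    ⟨(hT1 i hi).trans_le (le_lastRelease (hT1 i hi) (h1 i hi).le),
      lastRelease_le (hT1 i hi) hDk.le⟩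
  have hgron : Ck' + (1 + b) * S + S ≤ (Ck' + (1 + b) * S) * P :=
    add_sum_mul_le_mul_prod_one_add_s7 hp1 r (fun i => σ * U i) _ (fun i hi => (hr i hi).1.le) hu
      fun i hi => (hdemand (r i) (hr i hi).1 (hr i hi).2).le
  have hP : P ≤ (2 + b) / (Ck' / Dk + 1 + b) :=
    prod_one_add_le_of_sum_le_log hu (by positivity) (mul_sum hp1 U σ ▸ hcond)
  have hw i (hi : i ∈ hp1) : 0 ≤ σ * U i * r i := mul_nonneg (hu i hi) (hr i hi).1.le
  have hfilter : ∑ i ∈ hp1 with r i < Dk, σ * U i * r i ≤ S :=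
    sum_le_sum_of_subset_of_nonneg (filter_subset _ _) fun i hi _ => hw i hi
  linarith [hdemand Dk hDk le_rfl, add_two_add_mul_le_of_le_mul hCk'pos hb hDk (sum_nonneg hw) hgron hP]

theorem constant_inflation_logarithmic_test
    {ι : Type*} [DecidableEq ι]
    (k : ℕ) (hk : 2 ≤ k) (σ b Dk Ck : ℝ)
    (hσ : 0 < σ) (hb : 0 ≤ b) (hDk : 0 < Dk) (hCk : 0 < Ck)
    (hp1 hp2 : Finset ι) (hdisj : Disjoint hp1 hp2)
    (hcard : hp1.card + hp2.card = k - 1)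
    (T C U : ι → ℝ)
    (hT : ∀ i ∈ hp1 ∪ hp2, 0 < T i)
    (hC : ∀ i ∈ hp1 ∪ hp2, 0 < C i)
    (hU : ∀ i ∈ hp1 ∪ hp2, U i = C i / T i)
    (h1 : ∀ i ∈ hp1, T i < Dk)
    (h2 : ∀ i ∈ hp2, Dk ≤ T i)
    (Ck' : ℝ) (hCk' : Ck' = Ck + ∑ i ∈ hp2, σ * (1 + b) * C i)
    (hcond : σ * ∑ i ∈ hp1, U i ≤ Real.log ((2 + b) / (Ck' / Dk + 1 + b))) :
    ∃ t : ℝ, 0 < t ∧ t ≤ Dk ∧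
      Ck + ∑ i ∈ hp1 ∪ hp2, σ * ((⌈t / T i⌉ : ℝ) * C i + b * C i) ≤ t :=
  constant_inflation_logarithmic_test_general σ b Dk Ck hσ hb hDk hCk hp1 hp2 hdisj T C U hT hC hU
    h1 h2 Ck' hCk' hcond
end

section
/- Let σ > 0, b ≥ 0, γ > 0, D_k > 0, C_k > 0, and t_delay be reals with 0 < t_delay < D_k, and let higher-priority tasks be given, each with period T_i > 0 and execution time C_i > 0. Then the following are equivalent: (i) there exists t with t_delay < t ≤ D_k such that C_k + Σ_i σ·(⌈t/T_i⌉·C_i + b·C_i) ≤ γ·(t − t_delay); (ii) there exists t with 0 < t ≤ D_k such that (C_k + γ·t_delay)/γ + Σ_i (σ/γ)·(⌈t/T_i⌉·C_i + b·C_i) ≤ t. In particular, for any t with 0 < t ≤ t_delay, the inequality (C_k + γ·t_delay)/γ + Σ_i (σ/γ)·(⌈t/T_i⌉·C_i + b·C_i) ≤ t never holds. -/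
/-! Multiplying the inflated test by `γ > 0` turns it into the service-curve test at the same
instant `t`, so the two existentials differ only in the admissible range of `t`. The interference
is nonnegative for `t > 0` and `C_k > 0`, so the service-curve test can only hold where
`γ * (t - t_delay)` is positive, i.e. for `t > t_delay`. -/

open Finset

section Interference

variable {ι : Type*} (σ b : ℝ) (tasks : Finset ι) (T C : ι → ℝ)

noncomputable def interference (t : ℝ) : ℝ :=
  ∑ i ∈ tasks, σ * ((⌈t / T i⌉ : ℝ) * C i + b * C i)

variable {σ b tasks T C} in
lemma interference_nonneg (hσ : 0 ≤ σ) (hb : 0 ≤ b)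
    (hT : ∀ i ∈ tasks, 0 ≤ T i) (hC : ∀ i ∈ tasks, 0 ≤ C i) {t : ℝ} (ht : 0 ≤ t) :
    0 ≤ interference σ b tasks T C t := by
  refine sum_nonneg fun i hi => mul_nonneg hσ (add_nonneg (mul_nonneg ?_ (hC i hi))
    (mul_nonneg hb (hC i hi)))
  exact_mod_cast Int.ceil_nonneg (div_nonneg ht (hT i hi))

lemma inflated_test_le_iff {γ : ℝ} (hγ : 0 < γ) (Ck d t : ℝ) :
    (Ck + γ * d) / γ + ∑ i ∈ tasks, (σ / γ) * ((⌈t / T i⌉ : ℝ) * C i + b * C i) ≤ t ↔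
      Ck + interference σ b tasks T C t ≤ γ * (t - d) := by
  have hsum : ∑ i ∈ tasks, (σ / γ) * ((⌈t / T i⌉ : ℝ) * C i + b * C i) =
      interference σ b tasks T C t / γ := by
    rw [interference, sum_div]
    exact sum_congr rfl fun i _ => by ring
  rw [hsum, ← add_div, div_le_iff₀ hγ]
  constructor <;> intro h <;> linarith

end Interference

lemma lt_of_pos_add_nonneg_le_mul_sub {γ a w d t : ℝ} (hγ : 0 < γ) (ha : 0 < a) (hw : 0 ≤ w)
    (h : a + w ≤ γ * (t - d)) : d < t := by
  by_contra! hle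
  nlinarith

theorem bounded_delay_service_curve_reformulation_general
    {ι : Type*} (σ b γ Dk Ck tdelay : ℝ)
    (hσ : 0 < σ) (hb : 0 ≤ b) (hγ : 0 < γ) (hCk : 0 < Ck)
    (hd1 : 0 < tdelay)
    (tasks : Finset ι) (T C : ι → ℝ)
    (hT : ∀ i ∈ tasks, 0 < T i)
    (hC : ∀ i ∈ tasks, 0 < C i) :
    ((∃ t : ℝ, tdelay < t ∧ t ≤ Dk ∧
        Ck + ∑ i ∈ tasks, σ * ((⌈t / T i⌉ : ℝ) * C i + b * C i) ≤ γ * (t - tdelay)) ↔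
     (∃ t : ℝ, 0 < t ∧ t ≤ Dk ∧
        (Ck + γ * tdelay) / γ
          + ∑ i ∈ tasks, (σ / γ) * ((⌈t / T i⌉ : ℝ) * C i + b * C i) ≤ t)) ∧
    (∀ t : ℝ, 0 < t → t ≤ tdelay →
      ¬((Ck + γ * tdelay) / γ
          + ∑ i ∈ tasks, (σ / γ) * ((⌈t / T i⌉ : ℝ) * C i + b * C i) ≤ t)) := by
  have key := inflated_test_le_iff σ b tasks T C hγ Ck tdelay
  have late : ∀ t, 0 < t → Ck + interference σ b tasks T C t ≤ γ * (t - tdelay) →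
      tdelay < t := fun t ht =>
    lt_of_pos_add_nonneg_le_mul_sub hγ hCk <| interference_nonneg hσ.le hb
      (fun i hi => (hT i hi).le) (fun i hi => (hC i hi).le) ht.le
  refine ⟨⟨fun ⟨t, hdt, htD, h⟩ => ⟨t, hd1.trans hdt, htD, (key t).2 h⟩,
    fun ⟨t, ht, htD, h⟩ => ⟨t, late t ht ((key t).1 h), htD, (key t).1 h⟩⟩, ?_⟩
  intro t ht htd h
  exact (late t ht ((key t).1 h)).not_ge htd

theorem bounded_delay_service_curve_reformulation
    {ι : Type*} (σ b γ Dk Ck tdelay : ℝ)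
    (hσ : 0 < σ) (hb : 0 ≤ b) (hγ : 0 < γ) (hDk : 0 < Dk) (hCk : 0 < Ck)
    (hd1 : 0 < tdelay) (hd2 : tdelay < Dk)
    (tasks : Finset ι) (T C : ι → ℝ)
    (hT : ∀ i ∈ tasks, 0 < T i)
    (hC : ∀ i ∈ tasks, 0 < C i) :
    ((∃ t : ℝ, tdelay < t ∧ t ≤ Dk ∧
        Ck + ∑ i ∈ tasks, σ * ((⌈t / T i⌉ : ℝ) * C i + b * C i) ≤ γ * (t - tdelay)) ↔
     (∃ t : ℝ, 0 < t ∧ t ≤ Dk ∧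
        (Ck + γ * tdelay) / γ
          + ∑ i ∈ tasks, (σ / γ) * ((⌈t / T i⌉ : ℝ) * C i + b * C i) ≤ t)) ∧
    (∀ t : ℝ, 0 < t → t ≤ tdelay →
      ¬((Ck + γ * tdelay) / γ
          + ∑ i ∈ tasks, (σ / γ) * ((⌈t / T i⌉ : ℝ) * C i + b * C i) ≤ t)) :=
  bounded_delay_service_curve_reformulation_general σ b γ Dk Ck tdelay hσ hb hγ hCk hd1 tasks T C hT
    hC
end

section
/- Let k ≥ 2 be an integer, let T_cycle > 0 and C_slot > 0 be reals with C_slot ≤ T_cycle, and set γ = C_slot/T_cycle. Let T_1, …, T_k and C_1, …, C_k be positive reals with T_i ≤ T_k for all i < k, and assume T_cycle < T_k; set U_i = C_i/T_i. If ∏_{i=1}^{k} (U_i + 1) ≤ 2/(2 − γ), then there exists t with 0 < t ≤ T_k such that C_k + Σ_{i=1}^{k−1} ⌈t/T_i⌉·C_i ≤ t − ⌈t/T_cycle⌉·(T_cycle − C_slot). -/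
open Finset


/-- `⌈x⌉ ≤ 2⌈x/2⌉`. -/
lemma my_ceil_le_two_mul (x : ℝ) : (⌈x⌉ : ℤ) ≤ 2 * ⌈x / 2⌉ := by
  rw [Int.ceil_le]
  push_cast
  have := Int.le_ceil (x / 2)
  linarith

lemma my_ceil_le_pow_mul (m : ℕ) (x : ℝ) : (⌈x⌉ : ℤ) ≤ 2 ^ m * ⌈x / 2 ^ m⌉ := by
  induction m generalizing x with
  | zero => simp
  | succ n ih =>
    have h1 : (⌈x⌉ : ℤ) ≤ 2 * ⌈x / 2⌉ := my_ceil_le_two_mul x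
    have h2 : (⌈x / 2⌉ : ℤ) ≤ 2 ^ n * ⌈x / 2 / 2 ^ n⌉ := ih (x / 2)
    have h3 : x / 2 / 2 ^ n = x / 2 ^ (n + 1) := by
      rw [div_div]; ring_nf
    rw [h3] at h2
    calc (⌈x⌉ : ℤ) ≤ 2 * ⌈x / 2⌉ := h1
      _ ≤ 2 * (2 ^ n * ⌈x / 2 ^ (n + 1)⌉) := by linarith
      _ = 2 ^ (n + 1) * ⌈x / 2 ^ (n + 1)⌉ := by ring

lemma my_exists_pow_between : ∀ (n : ℕ) (D P : ℝ), 0 < P → P ≤ D → D ≤ 2 ^ n * P →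
    ∃ m : ℕ, D / 2 < 2 ^ m * P ∧ 2 ^ m * P ≤ D := by
  intro n
  induction n with
  | zero =>
    intro D P hP hPD hD
    simp only [pow_zero, one_mul] at hD
    exact ⟨0, by simp; nlinarith, by simpa using hPD⟩
  | succ n ih =>
    intro D P hP hPD hD
    by_cases h : D / 2 < P
    · exact ⟨0, by simpa using h, by simpa using hPD⟩
    · push_neg at h
      have hD' : D ≤ 2 ^ n * (2 * P) := by
        rw [pow_succ] at hD; nlinarith
      obtain ⟨m, h1, h2⟩ := ih D (2 * P) (by linarith) (by linarith) hD'
      refine ⟨m + 1, ?_, ?_⟩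
      · rw [pow_succ]; nlinarith
      · rw [pow_succ]; nlinarith

def MyChain : List (ℝ × ℝ) → ℝ → Prop
  | [], _ => True
  | p :: rest, B => p.1 < B ∧ MyChain rest (B + p.2)

lemma my_snd_sum_nonneg (l : List (ℝ × ℝ)) (h : ∀ p ∈ l, 0 ≤ p.2) :
    0 ≤ (l.map Prod.snd).sum := by
  apply List.sum_nonneg
  intro x hx
  obtain ⟨p, hp, rfl⟩ := List.mem_map.1 hx
  exact h p hp

lemma my_chain_prod : ∀ (l : List (ℝ × ℝ)), (∀ p ∈ l, 0 < p.1 ∧ 0 ≤ p.2) →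
    ∀ B : ℝ, 0 < B → MyChain l B →
    (B + (l.map Prod.snd).sum) / B ≤ (l.map fun p => p.2 / p.1 + 1).prod := by
  intro l
  induction l with
  | nil => intro _ B hB _; simp [div_self hB.ne']
  | cons p rest ih =>
    intro hmem B hB hch
    obtain ⟨hPB, hch'⟩ := hch
    obtain ⟨hP, hc⟩ := hmem p (List.mem_cons_self ..)
    have hrmem : ∀ q ∈ rest, 0 < q.1 ∧ 0 ≤ q.2 :=
      fun q hq => hmem q (List.mem_cons_of_mem _ hq)
    have hrest := ih hrmem (B + p.2) (by linarith) hch'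
    simp only [List.map_cons, List.sum_cons, List.prod_cons]
    set s : ℝ := (rest.map Prod.snd).sum with hs
    have hs0 : 0 ≤ s := my_snd_sum_nonneg rest (fun q hq => (hrmem q hq).2)
    have h1 : (B + p.2) / B ≤ p.2 / p.1 + 1 := by
      have hd : p.2 / B ≤ p.2 / p.1 := by
        gcongr
      rw [add_div, div_self hB.ne']
      linarith
    have hrpos : 0 ≤ (B + p.2 + s) / (B + p.2) :=
      div_nonneg (by linarith) (by linarith)
    calc (B + (p.2 + s)) / B
        = ((B + p.2) / B) * ((B + p.2 + s) / (B + p.2)) := by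
          field_simp
          ring
      _ ≤ (p.2 / p.1 + 1) * (rest.map fun p => p.2 / p.1 + 1).prod :=
          mul_le_mul h1 hrest hrpos (by positivity)

lemma my_ceil_le_one {x q : ℝ} (hq : 0 < q) (h : x ≤ q) : ((⌈x / q⌉ : ℤ) : ℝ) ≤ 1 := by
  have : (⌈x / q⌉ : ℤ) ≤ 1 := by
    rw [Int.ceil_le]
    push_cast
    rw [div_le_one hq]
    exact h
  exact_mod_cast this

lemma my_ceil_le_two {x q : ℝ} (hq : 0 < q) (h : x ≤ 2 * q) : ((⌈x / q⌉ : ℤ) : ℝ) ≤ 2 := by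
  have : (⌈x / q⌉ : ℤ) ≤ 2 := by
    rw [Int.ceil_le]
    push_cast
    rw [div_le_iff₀ hq]
    linarith
  exact_mod_cast this

lemma my_fail_chain (D : ℝ) :
    ∀ l : List (ℝ × ℝ), l.Pairwise (fun p q => p.1 ≤ q.1) →
    (∀ p ∈ l, 0 < p.1 ∧ 0 ≤ p.2 ∧ D / 2 < p.1 ∧ p.1 ≤ D) →
    ∀ B : ℝ,
    (∀ p ∈ l, p.1 < B + (l.map fun q => (⌈p.1 / q.1⌉ : ℝ) * q.2).sum) →
    MyChain l (B + (l.map Prod.snd).sum) := by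
  intro l
  induction l with
  | nil => intro _ _ B _; trivial
  | cons a rest ih =>
    intro hsort hmem B hfail
    obtain ⟨hsa, hsrest⟩ := List.pairwise_cons.1 hsort
    obtain ⟨ha1, ha2, ha3, ha4⟩ := hmem a (List.mem_cons_self ..)
    simp only [List.map_cons, List.sum_cons]
    constructor
    · -- a.1 < B + (a.2 + sum rest)
      have h := hfail a (List.mem_cons_self ..)
      simp only [List.map_cons, List.sum_cons] at h
      have hbound : ((rest.map fun q => (⌈a.1 / q.1⌉ : ℝ) * q.2).sum)
          ≤ (rest.map Prod.snd).sum := by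
        apply List.sum_le_sum
        intro q hq
        obtain ⟨hq1, hq2, _, _⟩ := hmem q (List.mem_cons_of_mem _ hq)
        have := my_ceil_le_one hq1 (hsa q hq)
        nlinarith
      have hself : ((⌈a.1 / a.1⌉ : ℝ)) * a.2 ≤ a.2 := by
        have := my_ceil_le_one ha1 (le_refl a.1)
        nlinarith
      linarith
    · -- chain on rest
      have heq : B + (a.2 + (rest.map Prod.snd).sum) + a.2
          = (B + 2 * a.2) + (rest.map Prod.snd).sum := by ring
      rw [heq]
      apply ih hsrest (fun q hq => hmem q (List.mem_cons_of_mem _ hq))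
      intro p hp
      have h := hfail p (List.mem_cons_of_mem _ hp)
      simp only [List.map_cons, List.sum_cons] at h
      obtain ⟨hp1, hp2, hp3, hp4⟩ := hmem p (List.mem_cons_of_mem _ hp)
      have hc2 : ((⌈p.1 / a.1⌉ : ℝ)) * a.2 ≤ 2 * a.2 := by
        have := my_ceil_le_two ha1 (by linarith : p.1 ≤ 2 * a.1)
        nlinarith
      linarith

lemma my_core_sorted (D C0 : ℝ) (hD : 0 < D) (hC0 : 0 < C0) (l : List (ℝ × ℝ))
    (hsort : l.Pairwise (fun p q => p.1 ≤ q.1))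
    (hl : ∀ p ∈ l, 0 < p.1 ∧ 0 ≤ p.2 ∧ D / 2 < p.1 ∧ p.1 ≤ D)
    (hcond : (C0 / D + 1) * (l.map fun p => p.2 / p.1 + 1).prod ≤ 2) :
    ∃ t : ℝ, 0 < t ∧ t ≤ D ∧ C0 + (l.map fun q => (⌈t / q.1⌉ : ℝ) * q.2).sum ≤ t := by
  by_contra hcon
  push_neg at hcon
  set s : ℝ := (l.map Prod.snd).sum with hs
  have hs0 : 0 ≤ s := my_snd_sum_nonneg l (fun p hp => (hl p hp).2.1)
  -- failures at each period
  have hfail : ∀ p ∈ l, p.1 < C0 + (l.map fun q => (⌈p.1 / q.1⌉ : ℝ) * q.2).sum := by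
    intro p hp
    obtain ⟨h1, _, _, h4⟩ := hl p hp
    exact hcon p.1 h1 h4
  have hchain := my_fail_chain D l hsort hl C0 hfail
  have hprod := my_chain_prod l (fun p hp => ⟨(hl p hp).1, (hl p hp).2.1⟩)
    (C0 + s) (by linarith) hchain
  -- failure at D
  have hfD : D < C0 + (l.map fun q => (⌈D / q.1⌉ : ℝ) * q.2).sum := hcon D hD le_rfl
  have hWD : (l.map fun q => (⌈D / q.1⌉ : ℝ) * q.2).sum ≤ (l.map fun q => 2 * q.2).sum := by
    apply List.sum_le_sum
    intro q hq
    obtain ⟨h1, h2, h3, _⟩ := hl q hq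
    have := my_ceil_le_two h1 (by linarith : D ≤ 2 * q.1)
    nlinarith
  have h2s : (l.map fun q => 2 * q.2).sum = 2 * s := by
    rw [hs, ← List.sum_map_mul_left]
  have hDlt : D < C0 + 2 * s := by
    rw [h2s] at hWD; linarith
  -- combine
  set Q : ℝ := (l.map fun p => p.2 / p.1 + 1).prod with hQ
  have hkey : C0 + s + s ≤ Q * (C0 + s) := by
    rw [div_le_iff₀ (by linarith : (0:ℝ) < C0 + s)] at hprod
    linarith
  have hcond' : (C0 + D) * Q ≤ 2 * D := by
    have : C0 / D + 1 = (C0 + D) / D := by field_simp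
    rw [this, div_mul_eq_mul_div, div_le_iff₀ hD] at hcond
    linarith
  have hQ0 : 0 < Q := by nlinarith
  nlinarith [mul_le_mul_of_nonneg_left hkey (by linarith : (0:ℝ) ≤ C0 + D),
    mul_le_mul_of_nonneg_right hcond' (by linarith : (0:ℝ) ≤ C0 + s)]

lemma my_core_range (D C0 : ℝ) (hD : 0 < D) (hC0 : 0 < C0) (l : List (ℝ × ℝ))
    (hl : ∀ p ∈ l, 0 < p.1 ∧ 0 ≤ p.2 ∧ D / 2 < p.1 ∧ p.1 ≤ D)
    (hcond : (C0 / D + 1) * (l.map fun p => p.2 / p.1 + 1).prod ≤ 2) :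
    ∃ t : ℝ, 0 < t ∧ t ≤ D ∧ C0 + (l.map fun q => (⌈t / q.1⌉ : ℝ) * q.2).sum ≤ t := by
  classical
  set r : ℝ × ℝ → ℝ × ℝ → Prop := fun p q => p.1 ≤ q.1 with hr
  haveI : DecidableRel r := fun a b => by unfold r; infer_instance
  haveI : Std.Total r := ⟨fun a b => le_total a.1 b.1⟩
  haveI : IsTrans (ℝ × ℝ) r := ⟨fun a b c h1 h2 => le_trans h1 h2⟩
  have hperm : l.Perm (l.insertionSort r) := (List.perm_insertionSort r l).symm
  have hsort : (l.insertionSort r).Pairwise r := List.pairwise_insertionSort r l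
  have hmem : ∀ p ∈ l.insertionSort r, 0 < p.1 ∧ 0 ≤ p.2 ∧ D / 2 < p.1 ∧ p.1 ≤ D :=
    fun p hp => hl p (hperm.mem_iff.2 hp)
  have hprodeq : ((l.insertionSort r).map fun p => p.2 / p.1 + 1).prod
      = (l.map fun p => p.2 / p.1 + 1).prod :=
    (hperm.map _).prod_eq.symm
  obtain ⟨t, ht1, ht2, ht3⟩ := my_core_sorted D C0 hD hC0 (l.insertionSort r) hsort hmem
    (by rw [hprodeq]; exact hcond)
  refine ⟨t, ht1, ht2, ?_⟩
  have : (l.map fun q => (⌈t / q.1⌉ : ℝ) * q.2).sum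
      = ((l.insertionSort r).map fun q => (⌈t / q.1⌉ : ℝ) * q.2).sum :=
    (hperm.map _).sum_eq
  rw [this]; exact ht3

lemma my_transform (D : ℝ) (hD : 0 < D) :
    ∀ l : List (ℝ × ℝ), (∀ p ∈ l, 0 < p.1 ∧ 0 ≤ p.2 ∧ p.1 ≤ D) →
    ∃ l' : List (ℝ × ℝ),
      (∀ p ∈ l', 0 < p.1 ∧ 0 ≤ p.2 ∧ D / 2 < p.1 ∧ p.1 ≤ D) ∧
      (l'.map fun p => p.2 / p.1 + 1).prod = (l.map fun p => p.2 / p.1 + 1).prod ∧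
      ∀ t : ℝ, (l.map fun q => (⌈t / q.1⌉ : ℝ) * q.2).sum
        ≤ (l'.map fun q => (⌈t / q.1⌉ : ℝ) * q.2).sum := by
  intro l
  induction l with
  | nil => intro _; exact ⟨[], by simp, by simp, by simp⟩
  | cons a rest ih =>
    intro hmem
    obtain ⟨l', h1, h2, h3⟩ := ih (fun q hq => hmem q (List.mem_cons_of_mem _ hq))
    obtain ⟨ha1, ha2, ha3⟩ := hmem a (List.mem_cons_self ..)
    -- find n with D ≤ 2^n * a.1
    obtain ⟨n, hn⟩ := pow_unbounded_of_one_lt (D / a.1) (by norm_num : (1:ℝ) < 2)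
    have hn' : D ≤ 2 ^ n * a.1 := by
      rw [div_lt_iff₀ ha1] at hn
      linarith
    obtain ⟨m, hm1, hm2⟩ := my_exists_pow_between n D a.1 ha1 ha3 hn'
    refine ⟨(2 ^ m * a.1, 2 ^ m * a.2) :: l', ?_, ?_, ?_⟩
    · intro p hp
      rcases List.mem_cons.1 hp with h | h
      · subst h
        refine ⟨by positivity, by positivity, hm1, hm2⟩
      · exact h1 p h
    · simp only [List.map_cons, List.prod_cons, h2]
      congr 1
      rw [mul_div_mul_left _ _ (by positivity : (2:ℝ) ^ m ≠ 0)]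
    · intro t
      simp only [List.map_cons, List.sum_cons]
      have hc : (⌈t / a.1⌉ : ℝ) * a.2 ≤ (⌈t / (2 ^ m * a.1)⌉ : ℝ) * (2 ^ m * a.2) := by
        have hint : (⌈t / a.1⌉ : ℤ) ≤ 2 ^ m * ⌈t / a.1 / 2 ^ m⌉ := my_ceil_le_pow_mul m (t / a.1)
        have harg : t / a.1 / 2 ^ m = t / (2 ^ m * a.1) := by
          rw [div_div]; ring_nf
        rw [harg] at hint
        have hr : ((⌈t / a.1⌉ : ℤ) : ℝ) ≤ (2:ℝ) ^ m * ((⌈t / (2 ^ m * a.1)⌉ : ℤ) : ℝ) := by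
          exact_mod_cast hint
        nlinarith
      linarith [h3 t]

lemma my_core (D C0 : ℝ) (hD : 0 < D) (hC0 : 0 < C0) (l : List (ℝ × ℝ))
    (hl : ∀ p ∈ l, 0 < p.1 ∧ 0 ≤ p.2 ∧ p.1 ≤ D)
    (hcond : (C0 / D + 1) * (l.map fun p => p.2 / p.1 + 1).prod ≤ 2) :
    ∃ t : ℝ, 0 < t ∧ t ≤ D ∧ C0 + (l.map fun q => (⌈t / q.1⌉ : ℝ) * q.2).sum ≤ t := by
  obtain ⟨l', h1, h2, h3⟩ := my_transform D hD l hl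
  obtain ⟨t, ht1, ht2, ht3⟩ := my_core_range D C0 hD hC0 l' h1 (by rw [h2]; exact hcond)
  exact ⟨t, ht1, ht2, by linarith [h3 t]⟩

theorem tdma_segmented_rm_test
    (k : ℕ) (hk : 2 ≤ k) (Tcycle Cslot : ℝ)
    (hTcycle : 0 < Tcycle) (hCslot : 0 < Cslot) (hle : Cslot ≤ Tcycle)
    (γ : ℝ) (hγ : γ = Cslot / Tcycle)
    (T C U : ℕ → ℝ)
    (hT : ∀ i ∈ Finset.Icc 1 k, 0 < T i)
    (hC : ∀ i ∈ Finset.Icc 1 k, 0 < C i)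
    (hU : ∀ i ∈ Finset.Icc 1 k, U i = C i / T i)
    (hRM : ∀ i ∈ Finset.Icc 1 (k - 1), T i ≤ T k)
    (hcycle : Tcycle < T k)
    (hcond : ∏ i ∈ Finset.Icc 1 k, (U i + 1) ≤ 2 / (2 - γ)) :
    ∃ t : ℝ, 0 < t ∧ t ≤ T k ∧
      C k + ∑ i ∈ Finset.Icc 1 (k - 1), (⌈t / T i⌉ : ℝ) * C i
        ≤ t - (⌈t / Tcycle⌉ : ℝ) * (Tcycle - Cslot) := by
  have hkk : k ∈ Finset.Icc 1 k := by simp; omega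
  have hsub : Finset.Icc 1 (k - 1) ⊆ Finset.Icc 1 k :=
    Finset.Icc_subset_Icc_right (by omega)
  have hTk : 0 < T k := hT k hkk
  have hCk : 0 < C k := hC k hkk
  have hγ1 : γ ≤ 1 := by rw [hγ, div_le_one hTcycle]; exact hle
  have hγ0 : 0 < γ := by rw [hγ]; positivity
  have h2γ : 0 < 2 - γ := by linarith
  -- the list of higher-priority tasks plus virtual TDMA task
  set l : List (ℝ × ℝ) :=
    (Tcycle, Tcycle - Cslot) :: ((Finset.Icc 1 (k - 1)).toList.map fun i => (T i, C i))
    with hl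
  have hmem : ∀ p ∈ l, 0 < p.1 ∧ 0 ≤ p.2 ∧ p.1 ≤ T k := by
    intro p hp
    rcases List.mem_cons.1 hp with h | h
    · subst h
      refine ⟨hTcycle, ?_, hcycle.le⟩
      show (0:ℝ) ≤ Tcycle - Cslot
      linarith
    · obtain ⟨i, hi, rfl⟩ := List.mem_map.1 h
      rw [Finset.mem_toList] at hi
      exact ⟨hT i (hsub hi), (hC i (hsub hi)).le, hRM i hi⟩
  -- product computation
  have hprodl : (l.map fun p => p.2 / p.1 + 1).prod
      = (2 - γ) * ∏ i ∈ Finset.Icc 1 (k - 1), (C i / T i + 1) := by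
    rw [hl]
    simp only [List.map_cons, List.prod_cons, List.map_map]
    have h1 : (Tcycle - Cslot) / Tcycle + 1 = 2 - γ := by
      rw [hγ]; field_simp; ring
    have h2 : (((Finset.Icc 1 (k - 1)).toList).map
        ((fun p : ℝ × ℝ => p.2 / p.1 + 1) ∘ fun i => (T i, C i))).prod
        = ∏ i ∈ Finset.Icc 1 (k - 1), (C i / T i + 1) :=
      Finset.prod_map_toList _ _
    rw [h1, h2]
  -- transform hypothesis
  have hsplit : ∏ i ∈ Finset.Icc 1 k, (U i + 1)
      = (∏ i ∈ Finset.Icc 1 (k - 1), (U i + 1)) * (U k + 1) := by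
    obtain ⟨n, rfl⟩ : ∃ n, k = n + 1 := ⟨k - 1, by omega⟩
    simp only [Nat.add_sub_cancel]
    exact Finset.prod_Icc_succ_top (by omega) _
  have hUeq : ∏ i ∈ Finset.Icc 1 (k - 1), (U i + 1)
      = ∏ i ∈ Finset.Icc 1 (k - 1), (C i / T i + 1) := by
    apply Finset.prod_congr rfl
    intro i hi
    rw [hU i (hsub hi)]
  have hUk : U k = C k / T k := hU k hkk
  have hcond2 : (C k / T k + 1) * (l.map fun p => p.2 / p.1 + 1).prod ≤ 2 := by
    rw [hprodl]
    rw [hsplit, hUeq, hUk] at hcond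
    have := mul_le_mul_of_nonneg_left hcond h2γ.le
    rw [mul_div_cancel₀ _ h2γ.ne'] at this
    nlinarith
  obtain ⟨t, ht1, ht2, ht3⟩ := my_core (T k) (C k) hTk hCk l hmem hcond2
  refine ⟨t, ht1, ht2, ?_⟩
  rw [hl] at ht3
  simp only [List.map_cons, List.sum_cons, List.map_map] at ht3
  have hsum : (((Finset.Icc 1 (k - 1)).toList).map
      ((fun q : ℝ × ℝ => (⌈t / q.1⌉ : ℝ) * q.2) ∘ fun i => (T i, C i))).sum
      = ∑ i ∈ Finset.Icc 1 (k - 1), (⌈t / T i⌉ : ℝ) * C i :=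
    Finset.sum_map_toList _ _
  rw [hsum] at ht3
  linarith
end

section
/- Let k ≥ 2 be an integer and let γ > 0, t_delay ≥ 0, C_k > 0, and T_k > 0 be reals with t_delay < T_k. Let T_1, …, T_{k−1} and C_1, …, C_{k−1} be positive reals with T_i < T_k for all i, and set U_i = C_i/T_i. If ((C_k + γ·t_delay)/(γ·T_k) + 1)·∏_{i=1}^{k−1}(U_i/γ + 1) ≤ 2, then there exists t with 0 < t ≤ T_k such that C_k + Σ_{i=1}^{k−1} ⌈t/T_i⌉·C_i ≤ max{0, γ·(t − t_delay)}. -/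
open Finset

/-!
Dividing by `γ` turns the test into the response-time test `c + ∑ ⌈t / T i⌉ * C i ≤ t` with the
constant `c = (C_k + γ t_delay) / γ` and costs `C i / γ`. Suppose it fails on all of `(0, T_k]`.
Merging `m i` consecutive jobs of task `i` into one gives a task of period
`m i * T i ∈ [T_k / 2, T_k)` and cost `m i * C i`, with the same utilization and no smaller demand.
Once all periods lie within a factor `2` of each other, failure at each period yields, by induction
over the tasks in order of period, `c + 2 ∑ C ≤ (c + ∑ C) ∏ (U i + 1)`; failure at `T_k` yields
`T_k < c + 2 ∑ C`. Together these contradict `(c / T_k + 1) ∏ (U i + 1) ≤ 2`.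
-/

section Ceil

variable {K : Type*} [Field K] [LinearOrder K] [IsStrictOrderedRing K] [FloorRing K]

theorem Int.ceil_le_mul_ceil_div (x : K) {m : ℤ} (hm : 0 < m) : ⌈x⌉ ≤ m * ⌈x / m⌉ := by
  have hm' : (0 : K) < m := by exact_mod_cast hm
  rw [Int.ceil_le]
  push_cast
  calc x = m * (x / m) := by field_simp
    _ ≤ m * ⌈x / m⌉ := by gcongr; exact Int.le_ceil _

theorem exists_int_mul_mem_Ico {T D : K} (hT : 0 < T) (hTD : T < D) :
    ∃ m : ℤ, 0 < m ∧ D / 2 ≤ m * T ∧ m * T < D := by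
  set n := ⌈D / T⌉
  have hn : 1 < n := Int.lt_ceil.mpr (by rwa [Int.cast_one, one_lt_div hT])
  have hle : D ≤ n * T := (div_le_iff₀ hT).mp (Int.le_ceil _)
  have hlt : (n - 1 : K) * T < D :=
    (lt_div_iff₀ hT).mp (by linarith [Int.ceil_lt_add_one (D / T)])
  have hT_le : T ≤ (n - 1 : K) * T :=
    le_mul_of_one_le_left hT.le (by exact_mod_cast (by omega : (1 : ℤ) ≤ n - 1))
  refine ⟨n - 1, by omega, ?_, ?_⟩ <;> push_cast <;> linarith

end Ceil

section Workload

variable {ι : Type*}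

noncomputable def workload (c : ℝ) (T C : ι → ℝ) (S : Finset ι) (t : ℝ) : ℝ :=
  c + ∑ i ∈ S, (⌈t / T i⌉ : ℝ) * C i

theorem workload_insert [DecidableEq ι] (c : ℝ) (T C : ι → ℝ) {S : Finset ι} {j : ι}
    (hj : j ∉ S) (t : ℝ) :
    workload c T C (insert j S) t = workload (c + ⌈t / T j⌉ * C j) T C S t := by
  simp only [workload, sum_insert hj]
  ring

theorem workload_div (c γ : ℝ) (T C : ι → ℝ) (S : Finset ι) (t : ℝ) :
    workload (c / γ) T (fun i ↦ C i / γ) S t = workload c T C S t / γ := by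
  simp only [workload, add_div, sum_div, mul_div_assoc]

theorem ceil_div_mul_le {t T C : ℝ} (n : ℕ) (hT : 0 < T) (hC : 0 ≤ C) (ht : t ≤ n * T) :
    (⌈t / T⌉ : ℝ) * C ≤ n * C := by
  have : ⌈t / T⌉ ≤ (n : ℤ) := Int.ceil_le.mpr (by rw [div_le_iff₀ hT]; exact_mod_cast ht)
  gcongr
  exact_mod_cast this

theorem workload_le {c t : ℝ} {T C : ι → ℝ} {S : Finset ι} (n : ℕ) (hT : ∀ i ∈ S, 0 < T i)
    (hC : ∀ i ∈ S, 0 ≤ C i) (ht : ∀ i ∈ S, t ≤ n * T i) :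
    workload c T C S t ≤ c + n * ∑ i ∈ S, C i := by
  rw [workload, mul_sum]
  exact add_le_add le_rfl (sum_le_sum fun i hi ↦ ceil_div_mul_le n (hT i hi) (hC i hi) (ht i hi))

theorem workload_le_workload_mul {T C : ι → ℝ} {S : Finset ι} (c : ℝ) {m : ι → ℤ}
    (hm : ∀ i ∈ S, 0 < m i) (hC : ∀ i ∈ S, 0 ≤ C i) (t : ℝ) :
    workload c T C S t ≤ workload c (fun i ↦ m i * T i) (fun i ↦ m i * C i) S t := by
  refine add_le_add le_rfl (sum_le_sum fun i hi ↦ ?_)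
  rw [← mul_assoc, div_mul_eq_div_div_swap]
  gcongr
  · exact hC i hi
  · exact_mod_cast (Int.ceil_le_mul_ceil_div (t / T i) (hm i hi)).trans_eq (mul_comm _ _)

theorem add_two_mul_sum_le_mul_prod {c : ℝ} {T C : ι → ℝ} {S : Finset ι}
    (hT : ∀ i ∈ S, 0 < T i) (hC : ∀ i ∈ S, 0 ≤ C i) (hratio : ∀ i ∈ S, ∀ j ∈ S, T j ≤ 2 * T i)
    (hfail : ∀ j ∈ S, T j < workload c T C S (T j)) :
    c + 2 * ∑ i ∈ S, C i ≤ (c + ∑ i ∈ S, C i) * ∏ i ∈ S, (C i / T i + 1) := by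
  classical
  induction S using Finset.induction_on_min_value (f := T) generalizing c with
  | empty => simp
  | insert j S hjS hmin ih =>
    have hTj := hT j (mem_insert_self j S)
    have hCj := hC j (mem_insert_self j S)
    have hT' : ∀ i ∈ S, 0 < T i := fun i hi ↦ hT i (mem_insert_of_mem hi)
    have hC' : ∀ i ∈ S, 0 ≤ C i := fun i hi ↦ hC i (mem_insert_of_mem hi)
    have hfail' : ∀ i ∈ S, T i < workload (c + 2 * C j) T C S (T i) := by
      intro i hi
      refine (hfail i (mem_insert_of_mem hi)).trans_le ?_
      rw [workload_insert c T C hjS]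
      have := ceil_div_mul_le 2 hTj hCj (hratio j (mem_insert_self j S) i (mem_insert_of_mem hi))
      unfold workload
      push_cast at this
      linarith
    have ih' := ih hT' hC'
      (fun i hi j hj ↦ hratio i (mem_insert_of_mem hi) j (mem_insert_of_mem hj)) hfail'
    have hTj_lt : T j < c + ∑ i ∈ insert j S, C i := by
      simpa using (hfail j (mem_insert_self j S)).trans_le
        (workload_le 1 hT hC <| by simpa using hmin)
    rw [sum_insert hjS] at hTj_lt ⊢
    rw [prod_insert hjS]
    set s := c + (C j + ∑ i ∈ S, C i)
    have hstep : C j ≤ s * (C j / T j) :=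
      calc C j = T j * (C j / T j) := (mul_div_cancel₀ _ hTj.ne').symm
        _ ≤ s * (C j / T j) := by gcongr
    have hprod : 0 ≤ ∏ i ∈ S, (C i / T i + 1) :=
      prod_nonneg fun i hi ↦ by have := hT' i hi; have := hC' i hi; positivity
    calc c + 2 * (C j + ∑ i ∈ S, C i) = c + 2 * C j + 2 * ∑ i ∈ S, C i := by ring
      _ ≤ (c + 2 * C j + ∑ i ∈ S, C i) * ∏ i ∈ S, (C i / T i + 1) := ih'
      _ ≤ (s * (C j / T j + 1)) * ∏ i ∈ S, (C i / T i + 1) := by gcongr; linarith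
      _ = s * ((C j / T j + 1) * ∏ i ∈ S, (C i / T i + 1)) := by ring

theorem exists_workload_le_of_hyperbolic {c D : ℝ} {T C : ι → ℝ} {S : Finset ι}
    (hc : 0 < c) (hD : 0 < D) (hT : ∀ i ∈ S, 0 < T i) (hC : ∀ i ∈ S, 0 ≤ C i)
    (hTD : ∀ i ∈ S, T i < D) (h : (c / D + 1) * ∏ i ∈ S, (C i / T i + 1) ≤ 2) :
    ∃ t, 0 < t ∧ t ≤ D ∧ workload c T C S t ≤ t := by
  by_contra! hfail
  choose! m hm_pos hm_ge hm_lt using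
    fun i (hi : i ∈ S) ↦ exists_int_mul_mem_Ico (hT i hi) (hTD i hi)
  set T' : ι → ℝ := fun i ↦ m i * T i
  set C' : ι → ℝ := fun i ↦ m i * C i
  have hm : ∀ i ∈ S, (0 : ℝ) < m i := fun i hi ↦ by exact_mod_cast hm_pos i hi
  have hT' : ∀ i ∈ S, 0 < T' i := fun i hi ↦ mul_pos (hm i hi) (hT i hi)
  have hC' : ∀ i ∈ S, 0 ≤ C' i := fun i hi ↦ mul_nonneg (hm i hi).le (hC i hi)
  have hfail' : ∀ t, 0 < t → t ≤ D → t < workload c T' C' S t := fun t ht htD ↦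
    (hfail t ht htD).trans_le (workload_le_workload_mul c hm_pos hC t)
  have hprod : ∏ i ∈ S, (C' i / T' i + 1) = ∏ i ∈ S, (C i / T i + 1) :=
    prod_congr rfl fun i hi ↦ by rw [mul_div_mul_left _ _ (hm i hi).ne']
  have hbound := add_two_mul_sum_le_mul_prod hT' hC'
    (fun i hi j hj ↦ by linarith [hm_ge i hi, hm_lt j hj])
    (fun j hj ↦ hfail' _ (hT' j hj) (hm_lt j hj).le)
  have hD_lt : D < c + 2 * ∑ i ∈ S, C' i := (hfail' D hD le_rfl).trans_le
    (by exact_mod_cast workload_le 2 hT' hC' fun i hi ↦ by push_cast; linarith [hm_ge i hi])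
  rw [← hprod, div_add_one hD.ne', div_mul_eq_mul_div, div_le_iff₀ hD] at h
  have hsum : 0 ≤ ∑ i ∈ S, C' i := sum_nonneg hC'
  nlinarith [mul_le_mul_of_nonneg_left hbound (by positivity : 0 ≤ c + D)]

end Workload

theorem bounded_delay_rm_test_general
    (k : ℕ) (γ tdelay Ck Tk : ℝ)
    (hγ : 0 < γ) (hdelay : 0 ≤ tdelay) (hCk : 0 < Ck) (hTk : 0 < Tk)
    (T C U : ℕ → ℝ)
    (hT : ∀ i ∈ Finset.Icc 1 (k - 1), 0 < T i)
    (hC : ∀ i ∈ Finset.Icc 1 (k - 1), 0 < C i)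
    (hU : ∀ i ∈ Finset.Icc 1 (k - 1), U i = C i / T i)
    (hRM : ∀ i ∈ Finset.Icc 1 (k - 1), T i < Tk)
    (hcond : ((Ck + γ * tdelay) / (γ * Tk) + 1)
        * ∏ i ∈ Finset.Icc 1 (k - 1), (U i / γ + 1) ≤ 2) :
    ∃ t : ℝ, 0 < t ∧ t ≤ Tk ∧
      Ck + ∑ i ∈ Finset.Icc 1 (k - 1), (⌈t / T i⌉ : ℝ) * C i
        ≤ max 0 (γ * (t - tdelay)) := by
  have hc : 0 < (Ck + γ * tdelay) / γ := div_pos (by nlinarith) hγ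
  have hcond' : ((Ck + γ * tdelay) / γ / Tk + 1)
      * ∏ i ∈ Icc 1 (k - 1), (C i / γ / T i + 1) ≤ 2 := by
    rwa [div_div, prod_congr rfl fun i hi ↦ by rw [div_right_comm, ← hU i hi]]
  obtain ⟨t, ht, htT, hwork⟩ := exists_workload_le_of_hyperbolic hc hTk hT
    (fun i hi ↦ (div_pos (hC i hi) hγ).le) hRM hcond'
  rw [workload_div, div_le_iff₀ hγ, workload] at hwork
  exact ⟨t, ht, htT, le_max_of_le_right (by linarith)⟩

theorem bounded_delay_rm_test
    (k : ℕ) (hk : 2 ≤ k) (γ tdelay Ck Tk : ℝ)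
    (hγ : 0 < γ) (hdelay : 0 ≤ tdelay) (hCk : 0 < Ck) (hTk : 0 < Tk)
    (hdT : tdelay < Tk)
    (T C U : ℕ → ℝ)
    (hT : ∀ i ∈ Finset.Icc 1 (k - 1), 0 < T i)
    (hC : ∀ i ∈ Finset.Icc 1 (k - 1), 0 < C i)
    (hU : ∀ i ∈ Finset.Icc 1 (k - 1), U i = C i / T i)
    (hRM : ∀ i ∈ Finset.Icc 1 (k - 1), T i < Tk)
    (hcond : ((Ck + γ * tdelay) / (γ * Tk) + 1)
        * ∏ i ∈ Finset.Icc 1 (k - 1), (U i / γ + 1) ≤ 2) :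
    ∃ t : ℝ, 0 < t ∧ t ≤ Tk ∧
      Ck + ∑ i ∈ Finset.Icc 1 (k - 1), (⌈t / T i⌉ : ℝ) * C i
        ≤ max 0 (γ * (t - tdelay)) :=
  bounded_delay_rm_test_general k γ tdelay Ck Tk hγ hdelay hCk hTk T C U hT hC hU hRM hcond
end

section
/- Let k ≥ 2 be an integer, σ > 0, D_k > 0, and C_k' > 0 be reals, and let δ ≥ 0 be a real that is not an integer. For each i = 1, …, k−1, let T_i > 0 and C_i > 0 be reals such that ⌈(D_k + δ·T_i)/T_i⌉ > ⌈δ⌉, and set U_i = C_i/T_i, g_i = ⌊(D_k + δ·T_i)/T_i⌋, and t_i = (g_i − δ)·T_i. Also set t_k = D_k, and assume the tasks are indexed so that t_1 ≤ t_2 ≤ ⋯ ≤ t_{k−1}. Define α_i = σ·g_i/(g_i − δ) and β_i = σ/(g_i − δ). Then (1) every g_i is an integer with g_i > δ; (2) 0 < α_i ≤ σ·⌈δ⌉/(⌈δ⌉ − δ) and 0 < β_i ≤ σ/(⌈δ⌉ − δ) for every i; (3) for every j ∈ {1, …, k}, C_k' + Σ_{i=1}^{k−1} σ·⌈(t_j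 + δ·T_i)/T_i⌉·C_i ≤ C_k' + Σ_{i=1}^{k−1} α_i·t_i·U_i + Σ_{i=1}^{j−1} β_i·t_i·U_i. Consequently, if there exists j ∈ {1, …, k} with C_k' + Σ_{i=1}^{k−1} α_i·t_i·U_i + Σ_{i=1}^{j−1} β_i·t_i·U_i ≤ t_j, then there exists t with 0 < t ≤ D_k and C_k' + Σ_{i=1}^{k−1} σ·⌈(t + δ·T_i)/T_i⌉·C_i ≤ t. -/
/-!
Write `g_i = ⌊(D_k + δ T_i)/T_i⌋`. Since `⌈δ⌉ < ⌈(D_k + δ T_i)/T_i⌉ ≤ g_i + 1`, we get `⌈δ⌉ ≤ g_i`,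
and `δ < ⌈δ⌉` because `δ` is not an integer; the bounds on `α_i` and `β_i` follow because
`g ↦ g/(g - δ)` and `g ↦ 1/(g - δ)` decrease on `(δ, ∞)`. The identities `α_i t_i U_i = σ g_i C_i`
and `β_i t_i U_i = σ C_i` reduce (3) to a term-by-term bound on the ceilings at `s = t_j ≤ D_k`:
`⌈(s + δ T_i)/T_i⌉ ≤ g_i` when `s ≤ t_i = (g_i - δ) T_i`, which holds for `i ≥ j` by monotonicity,
and `⌈(s + δ T_i)/T_i⌉ ≤ g_i + 1` always. Taking `t = t_j` gives the final implication.
-/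

open Finset

theorem Int.ceil_le_floor_of_ceil_lt_ceil {a x : ℝ} (h : ⌈a⌉ < ⌈x⌉) : ⌈a⌉ ≤ ⌊x⌋ := by
  have := Int.ceil_le_floor_add_one x
  omega

theorem mul_div_sub_le_mul_div_sub {σ δ c g : ℝ} (hσ : 0 ≤ σ) (hδ : 0 ≤ δ) (hc : δ < c)
    (hcg : c ≤ g) : σ * g / (g - δ) ≤ σ * c / (c - δ) := by
  rw [div_le_div_iff₀ (by linarith) (by linarith)]
  nlinarith [mul_nonneg (mul_nonneg hσ hδ) (sub_nonneg.2 hcg)]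

theorem div_mul_mul_mul_div_cancel {a x T C : ℝ} (hx : x ≠ 0) (hT : T ≠ 0) :
    a / x * (x * T) * (C / T) = a * C := by
  field_simp

section Window

variable {D δ T s : ℝ}

theorem ceil_add_mul_div_le (hT : 0 < T) {n : ℤ} (h : s ≤ (n - δ) * T) :
    ⌈(s + δ * T) / T⌉ ≤ n := by
  rw [Int.ceil_le, div_le_iff₀ hT]
  linarith

theorem ceil_add_mul_div_le_floor_add_one (hT : 0 < T) (hs : s ≤ D) :
    ⌈(s + δ * T) / T⌉ ≤ ⌊(D + δ * T) / T⌋ + 1 :=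
  (Int.ceil_mono (by gcongr)).trans (Int.ceil_le_floor_add_one _)

theorem floor_add_mul_div_sub_mul_le (hT : 0 < T) : (⌊(D + δ * T) / T⌋ - δ) * T ≤ D := by
  have := (le_div_iff₀ hT).1 (Int.floor_le ((D + δ * T) / T))
  linarith

end Window

theorem sum_le_sum_add_sum_Icc_pred {f a b : ℕ → ℝ} {n j : ℕ} (hj : j ≤ n + 1)
    (hlt : ∀ i ∈ Icc 1 n, i < j → f i ≤ a i + b i) (hge : ∀ i ∈ Icc 1 n, j ≤ i → f i ≤ a i) :
    ∑ i ∈ Icc 1 n, f i ≤ ∑ i ∈ Icc 1 n, a i + ∑ i ∈ Icc 1 (j - 1), b i := by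
  have hfilter : (Icc 1 n).filter (· < j) = Icc 1 (j - 1) := by
    ext i
    simp only [mem_filter, mem_Icc]
    omega
  rw [← hfilter, sum_filter, ← sum_add_distrib]
  refine sum_le_sum fun i hi => ?_
  split_ifs with hij
  · exact hlt i hi hij
  · simpa using hge i hi (not_lt.1 hij)

theorem sum_ceil_add_mul_div_le {n j : ℕ} {σ D δ s : ℝ} {T C t : ℕ → ℝ} {g : ℕ → ℤ}
    (hσ : 0 ≤ σ) (hC : ∀ i ∈ Icc 1 n, 0 ≤ C i) (hT : ∀ i ∈ Icc 1 n, 0 < T i)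
    (hg : ∀ i ∈ Icc 1 n, g i = ⌊(D + δ * T i) / T i⌋)
    (ht : ∀ i ∈ Icc 1 n, t i = ((g i : ℝ) - δ) * T i)
    (hs : s ≤ D) (hj : j ≤ n + 1) (hst : ∀ i ∈ Icc 1 n, j ≤ i → s ≤ t i) :
    ∑ i ∈ Icc 1 n, σ * (⌈(s + δ * T i) / T i⌉ : ℝ) * C i
      ≤ ∑ i ∈ Icc 1 n, σ * (g i : ℝ) * C i + ∑ i ∈ Icc 1 (j - 1), σ * C i := by
  refine sum_le_sum_add_sum_Icc_pred hj (fun i hi _ => ?_) (fun i hi hji => ?_)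
  · have hceil := ceil_add_mul_div_le_floor_add_one (δ := δ) (hT i hi) hs
    rw [← hg i hi] at hceil
    have := hC i hi
    calc σ * (⌈(s + δ * T i) / T i⌉ : ℝ) * C i ≤ σ * ((g i : ℝ) + 1) * C i := by
          gcongr; exact_mod_cast hceil
      _ = σ * (g i : ℝ) * C i + σ * C i := by ring
  · have hceil := ceil_add_mul_div_le (hT i hi) ((hst i hi hji).trans (ht i hi).le)
    have := hC i hi
    gcongr

theorem arrival_jitter_k2u_parameters_general
    (k : ℕ) (σ Dk Ck' δ : ℝ)
    (hσ : 0 < σ) (hDk : 0 < Dk) (hδ : 0 ≤ δ)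
    (hδint : ∀ n : ℤ, (n : ℝ) ≠ δ)
    (T C : ℕ → ℝ)
    (hT : ∀ i ∈ Finset.Icc 1 (k - 1), 0 < T i)
    (hC : ∀ i ∈ Finset.Icc 1 (k - 1), 0 < C i)
    (hhp1 : ∀ i ∈ Finset.Icc 1 (k - 1), ⌈δ⌉ < ⌈(Dk + δ * T i) / T i⌉)
    (U : ℕ → ℝ) (hU : ∀ i ∈ Finset.Icc 1 (k - 1), U i = C i / T i)
    (g : ℕ → ℤ) (hg : ∀ i ∈ Finset.Icc 1 (k - 1), g i = ⌊(Dk + δ * T i) / T i⌋)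
    (t : ℕ → ℝ) (ht : ∀ i ∈ Finset.Icc 1 (k - 1), t i = ((g i : ℝ) - δ) * T i)
    (htk : t k = Dk)
    (hmono : ∀ i ∈ Finset.Icc 1 (k - 1), ∀ j ∈ Finset.Icc 1 (k - 1), i ≤ j → t i ≤ t j)
    (A B : ℕ → ℝ)
    (hA : ∀ i ∈ Finset.Icc 1 (k - 1), A i = σ * (g i : ℝ) / ((g i : ℝ) - δ))
    (hB : ∀ i ∈ Finset.Icc 1 (k - 1), B i = σ / ((g i : ℝ) - δ)) :
    (∀ i ∈ Finset.Icc 1 (k - 1), δ < (g i : ℝ)) ∧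
    (∀ i ∈ Finset.Icc 1 (k - 1),
      (0 < A i ∧ A i ≤ σ * (⌈δ⌉ : ℝ) / ((⌈δ⌉ : ℝ) - δ)) ∧
      (0 < B i ∧ B i ≤ σ / ((⌈δ⌉ : ℝ) - δ))) ∧
    (∀ j ∈ Finset.Icc 1 k,
      Ck' + ∑ i ∈ Finset.Icc 1 (k - 1), σ * (⌈(t j + δ * T i) / T i⌉ : ℝ) * C i
        ≤ Ck' + (∑ i ∈ Finset.Icc 1 (k - 1), A i * t i * U i)
            + (∑ i ∈ Finset.Icc 1 (j - 1), B i * t i * U i)) ∧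
    ((∃ j ∈ Finset.Icc 1 k,
        Ck' + (∑ i ∈ Finset.Icc 1 (k - 1), A i * t i * U i)
          + (∑ i ∈ Finset.Icc 1 (j - 1), B i * t i * U i) ≤ t j) →
      ∃ t' : ℝ, 0 < t' ∧ t' ≤ Dk ∧
        Ck' + ∑ i ∈ Finset.Icc 1 (k - 1), σ * (⌈(t' + δ * T i) / T i⌉ : ℝ) * C i ≤ t') := by
  have hδc : δ < ⌈δ⌉ := (Int.le_ceil δ).lt_of_ne fun h => hδint _ h.symm
  have hg_ge (i) (hi : i ∈ Icc 1 (k - 1)) : (⌈δ⌉ : ℝ) ≤ g i := by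
    rw [hg i hi]; exact_mod_cast Int.ceil_le_floor_of_ceil_lt_ceil (hhp1 i hi)
  have hδg (i) (hi : i ∈ Icc 1 (k - 1)) : δ < g i := hδc.trans_le (hg_ge i hi)
  have ht_mem (j) (hj : j ∈ Icc 1 k) : 0 < t j ∧ t j ≤ Dk := by
    rcases (mem_Icc.1 hj).2.eq_or_lt with rfl | hjk
    · exact ⟨htk ▸ hDk, htk.le⟩
    have hj' : j ∈ Icc 1 (k - 1) := mem_Icc.2 ⟨(mem_Icc.1 hj).1, by omega⟩
    refine ⟨ht j hj' ▸ mul_pos (sub_pos.2 (hδg j hj')) (hT j hj'), ?_⟩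
    rw [ht j hj', hg j hj']
    exact floor_add_mul_div_sub_mul_le (hT j hj')
  have hdemand (j) (hj : j ∈ Icc 1 k) :
      ∑ i ∈ Icc 1 (k - 1), σ * (⌈(t j + δ * T i) / T i⌉ : ℝ) * C i
        ≤ ∑ i ∈ Icc 1 (k - 1), A i * t i * U i + ∑ i ∈ Icc 1 (j - 1), B i * t i * U i := by
    have hjk := (mem_Icc.1 hj).2
    have hαtU (i) (hi : i ∈ Icc 1 (k - 1)) : A i * t i * U i = σ * g i * C i := by
      rw [hA i hi, ht i hi, hU i hi,
        div_mul_mul_mul_div_cancel (sub_pos.2 (hδg i hi)).ne' (hT i hi).ne']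
    have hβtU (i) (hi : i ∈ Icc 1 (j - 1)) : B i * t i * U i = σ * C i := by
      have hi' : i ∈ Icc 1 (k - 1) := Icc_subset_Icc le_rfl (by omega) hi
      rw [hB i hi', ht i hi', hU i hi',
        div_mul_mul_mul_div_cancel (sub_pos.2 (hδg i hi')).ne' (hT i hi').ne']
    rw [sum_congr rfl hαtU, sum_congr rfl hβtU]
    refine sum_ceil_add_mul_div_le hσ.le (fun i hi => (hC i hi).le) hT hg ht (ht_mem j hj).2
      (by omega) fun i hi hji => hmono j (mem_Icc.2 ⟨(mem_Icc.1 hj).1, ?_⟩) i hi hji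
    exact hji.trans (mem_Icc.1 hi).2
  refine ⟨hδg, fun i hi => ?_, fun j hj => by linarith [hdemand j hj], ?_⟩
  · have hg_pos : (0 : ℝ) < g i := hδ.trans_lt (hδg i hi)
    rw [hA i hi, hB i hi]
    exact ⟨⟨div_pos (mul_pos hσ hg_pos) (sub_pos.2 (hδg i hi)),
        mul_div_sub_le_mul_div_sub hσ.le hδ hδc (hg_ge i hi)⟩,
      div_pos hσ (sub_pos.2 (hδg i hi)),
        div_le_div_of_nonneg_left hσ.le (sub_pos.2 hδc) (by linarith [hg_ge i hi])⟩
  · rintro ⟨j, hj, hle⟩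
    exact ⟨t j, (ht_mem j hj).1, (ht_mem j hj).2, by linarith [hdemand j hj]⟩

theorem arrival_jitter_k2u_parameters
    (k : ℕ) (hk : 2 ≤ k) (σ Dk Ck' δ : ℝ)
    (hσ : 0 < σ) (hDk : 0 < Dk) (hCk' : 0 < Ck') (hδ : 0 ≤ δ)
    (hδint : ∀ n : ℤ, (n : ℝ) ≠ δ)
    (T C : ℕ → ℝ)
    (hT : ∀ i ∈ Finset.Icc 1 (k - 1), 0 < T i)
    (hC : ∀ i ∈ Finset.Icc 1 (k - 1), 0 < C i)
    (hhp1 : ∀ i ∈ Finset.Icc 1 (k - 1), ⌈δ⌉ < ⌈(Dk + δ * T i) / T i⌉)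
    (U : ℕ → ℝ) (hU : ∀ i ∈ Finset.Icc 1 (k - 1), U i = C i / T i)
    (g : ℕ → ℤ) (hg : ∀ i ∈ Finset.Icc 1 (k - 1), g i = ⌊(Dk + δ * T i) / T i⌋)
    (t : ℕ → ℝ) (ht : ∀ i ∈ Finset.Icc 1 (k - 1), t i = ((g i : ℝ) - δ) * T i)
    (htk : t k = Dk)
    (hmono : ∀ i ∈ Finset.Icc 1 (k - 1), ∀ j ∈ Finset.Icc 1 (k - 1), i ≤ j → t i ≤ t j)
    (A B : ℕ → ℝ)
    (hA : ∀ i ∈ Finset.Icc 1 (k - 1), A i = σ * (g i : ℝ) / ((g i : ℝ) - δ))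
    (hB : ∀ i ∈ Finset.Icc 1 (k - 1), B i = σ / ((g i : ℝ) - δ)) :
    (∀ i ∈ Finset.Icc 1 (k - 1), δ < (g i : ℝ)) ∧
    (∀ i ∈ Finset.Icc 1 (k - 1),
      (0 < A i ∧ A i ≤ σ * (⌈δ⌉ : ℝ) / ((⌈δ⌉ : ℝ) - δ)) ∧
      (0 < B i ∧ B i ≤ σ / ((⌈δ⌉ : ℝ) - δ))) ∧
    (∀ j ∈ Finset.Icc 1 k,
      Ck' + ∑ i ∈ Finset.Icc 1 (k - 1), σ * (⌈(t j + δ * T i) / T i⌉ : ℝ) * C i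
        ≤ Ck' + (∑ i ∈ Finset.Icc 1 (k - 1), A i * t i * U i)
            + (∑ i ∈ Finset.Icc 1 (j - 1), B i * t i * U i)) ∧
    ((∃ j ∈ Finset.Icc 1 k,
        Ck' + (∑ i ∈ Finset.Icc 1 (k - 1), A i * t i * U i)
          + (∑ i ∈ Finset.Icc 1 (j - 1), B i * t i * U i) ≤ t j) →
      ∃ t' : ℝ, 0 < t' ∧ t' ≤ Dk ∧
        Ck' + ∑ i ∈ Finset.Icc 1 (k - 1), σ * (⌈(t' + δ * T i) / T i⌉ : ℝ) * C i ≤ t') :=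
  arrival_jitter_k2u_parameters_general k σ Dk Ck' δ hσ hDk hδ hδint T C hT hC hhp1 U hU g hg t ht
    htk hmono A B hA hB
end
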